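/- arXiv:2405.13550 — 4 statements merged into one kernel-verified Lean document; each statement's English description precedes it below -/
import Mathlib

section
/- (Theorem 3.3(a).) Let A and N be bounded linear operators on a complex Hilbert space H, q ∈ ℝ, τ ≥ 0, and let V be a bounded operator satisfying the weak Lyapunov equation for (A, N, q, τ). Suppose w_i, w_j ∈ H and λ_i, λ_j ∈ ℂ satisfy A† w_i = conj(λ_i)·w_i, A† w_j = conj(λ_j)·w_j, and λ_i + conj(λ_j) ≠ 0. Then ⟨w_i, V w_j⟩ = −((λ_i − q)(conj(λ_j) − q)/(λ_i + conj(λ_j)))·e^{λ_i τ}·⟨w_i, N w_j⟩. Moreover, if V₀ is a bounded operator satisfying the weak Lyapunov equation for (A, N, q, 0), then ⟨w_i, V w_j⟩ = e^{λ_i τ}·⟨w_i, V₀ w_j⟩. -/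
local notation "⟪" x ", " y "⟫" => @inner ℂ _ _ x y

/-- A bounded operator `V` satisfies the weak Lyapunov equation for `(A, N, q, τ)` if
`⟨v, A(Vw)⟩ + ⟨v, V(A†w)⟩ = −⟨v, exp(τA)((A − q·I)(N((A† − q·I)w)))⟩` for all `v, w`. -/
def WeakLyapunov {H : Type*} [NormedAddCommGroup H] [InnerProductSpace ℂ H] [CompleteSpace H]
    (A N V : H →L[ℂ] H) (q τ : ℝ) : Prop :=
  ∀ v w : H,
    ⟪v, A (V w)⟫ + ⟪v, V ((ContinuousLinearMap.adjoint A) w)⟫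
      = -⟪v, (NormedSpace.exp ((τ : ℂ) • A))
          ((A - (q : ℂ) • (1 : H →L[ℂ] H))
            (N (((ContinuousLinearMap.adjoint A) - (q : ℂ) • (1 : H →L[ℂ] H)) w)))⟫

/-!
Testing the Lyapunov equation against `v = wᵢ`, `w = wⱼ` turns every operator into a scalar:
`A` acts on `⟨wᵢ, ·⟩` as multiplication by `λᵢ`, `A†` on `wⱼ` as `conj λⱼ`, and, since
`exp(τA)† = exp(τA†)` acts on the eigenvector `wᵢ` of `A†` by `exp(τ conj λᵢ)`, `exp(τA)` acts on
`⟨wᵢ, ·⟩` as `e^{λᵢτ}`. What remains is a single linear equation for `⟨wᵢ, V wⱼ⟩`, solvable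
when `λᵢ + conj λⱼ ≠ 0`; the second claim compares its solutions for `τ` and for `0`.
-/

open ContinuousLinearMap NormedSpace ComplexConjugate

theorem ContinuousLinearMap.exp_apply_of_apply_eq_smul {𝕂 E : Type*} [RCLike 𝕂]
    [NormedAddCommGroup E] [NormedSpace 𝕂 E] [CompleteSpace E]
    {B : E →L[𝕂] E} {x : E} {c : 𝕂} (h : B x = c • x) : exp B x = exp c • x := by
  have hpow (n : ℕ) : (B ^ n) x = c ^ n • x := by
    induction n with
    | zero => simp
    | succ n ih => rw [pow_succ, mul_apply_eq_comp, h, map_smul, ih, smul_smul, pow_succ']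
  refine ((exp_series_hasSum_exp' (𝕂 := 𝕂) B).mapL (apply 𝕂 E x)).unique ?_
  simpa [hpow, smul_smul] using (exp_series_hasSum_exp' (𝕂 := 𝕂) c).smul_const x

section Eigenvector

variable {H : Type*} [NormedAddCommGroup H] [InnerProductSpace ℂ H] [CompleteSpace H]
  {A : H →L[ℂ] H} {w : H} {l : ℂ}

theorem inner_apply_of_adjoint_apply_eq_smul (hw : adjoint A w = conj l • w) (y : H) :
    ⟪w, A y⟫ = l * ⟪w, y⟫ := by
  rw [← adjoint_inner_left, hw, inner_smul_left, Complex.conj_conj]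

theorem inner_exp_apply_of_adjoint_apply_eq_smul (hw : adjoint A w = conj l • w) (y : H) :
    ⟪w, exp A y⟫ = Complex.exp l * ⟪w, y⟫ := by
  have hexp : adjoint (exp A) w = Complex.exp (conj l) • w := by
    rw [← star_eq_adjoint, star_exp, star_eq_adjoint, exp_apply_of_apply_eq_smul hw,
      Complex.exp_eq_exp_ℂ]
  rw [← adjoint_inner_left, hexp, inner_smul_left, ← Complex.exp_conj, Complex.conj_conj]

end Eigenvector

section Lyapunov

variable {H : Type*} [NormedAddCommGroup H] [InnerProductSpace ℂ H] [CompleteSpace H]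
  {A N V : H →L[ℂ] H} {q τ : ℝ} {wi wj : H} {li lj : ℂ}

theorem WeakLyapunov.add_mul_inner_eq (hV : WeakLyapunov A N V q τ)
    (hwi : adjoint A wi = conj li • wi) (hwj : adjoint A wj = conj lj • wj) :
    (li + conj lj) * ⟪wi, V wj⟫
      = -((li - q) * (conj lj - q)) * Complex.exp (li * τ) * ⟪wi, N wj⟫ := by
  have hτA : adjoint ((τ : ℂ) • A) wi = conj (li * τ) • wi := by
    rw [map_smulₛₗ, smul_apply, hwi, smul_smul, map_mul, Complex.conj_ofReal, mul_comm]
  have hAqi : adjoint (A - (q : ℂ) • 1) wi = conj (li - q) • wi := by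
    rw [map_sub, map_smulₛₗ, adjoint_one, sub_apply, smul_apply, hwi, one_apply_eq_self,
      map_sub, Complex.conj_ofReal, sub_smul]
  have hAqj : (adjoint A - (q : ℂ) • 1) wj = (conj lj - q) • wj := by
    rw [sub_apply, smul_apply, one_apply_eq_self, hwj, sub_smul]
  have h := hV wi wj
  rw [inner_apply_of_adjoint_apply_eq_smul hwi, hwj, map_smul, inner_smul_right,
    inner_exp_apply_of_adjoint_apply_eq_smul hτA, inner_apply_of_adjoint_apply_eq_smul hAqi,
    hAqj, map_smul, inner_smul_right] at h
  linear_combination h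

theorem WeakLyapunov.inner_eq (hV : WeakLyapunov A N V q τ)
    (hwi : adjoint A wi = conj li • wi) (hwj : adjoint A wj = conj lj • wj)
    (hsum : li + conj lj ≠ 0) :
    ⟪wi, V wj⟫
      = -((li - q) * (conj lj - q) / (li + conj lj)) * Complex.exp (li * τ) * ⟪wi, N wj⟫ := by
  rw [← mul_right_inj' hsum, hV.add_mul_inner_eq hwi hwj]
  field_simp

end Lyapunov

theorem eigenfunction_autocovariance_formula_general
    {H : Type*} [NormedAddCommGroup H] [InnerProductSpace ℂ H] [CompleteSpace H]
    (A N V : H →L[ℂ] H) (q : ℝ) (τ : ℝ)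
    (hV : WeakLyapunov A N V q τ)
    (wi wj : H) (li lj : ℂ)
    (hwi : (ContinuousLinearMap.adjoint A) wi = (starRingEnd ℂ) li • wi)
    (hwj : (ContinuousLinearMap.adjoint A) wj = (starRingEnd ℂ) lj • wj)
    (hsum : li + (starRingEnd ℂ) lj ≠ 0) :
    ⟪wi, V wj⟫
        = -((li - (q : ℂ)) * ((starRingEnd ℂ) lj - (q : ℂ)) / (li + (starRingEnd ℂ) lj))
            * Complex.exp (li * (τ : ℂ)) * ⟪wi, N wj⟫
    ∧ ∀ V₀ : H →L[ℂ] H, WeakLyapunov A N V₀ q 0 →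
        ⟪wi, V wj⟫ = Complex.exp (li * (τ : ℂ)) * ⟪wi, V₀ wj⟫ := by
  refine ⟨hV.inner_eq hwi hwj hsum, fun V₀ hV₀ => ?_⟩
  rw [hV.inner_eq hwi hwj hsum, hV₀.inner_eq hwi hwj hsum, Complex.ofReal_zero, mul_zero,
    Complex.exp_zero]
  ring

/-- (Theorem 3.3(a).)  If `V` satisfies the weak Lyapunov equation for
`(A, N, q, τ)`, `A† wᵢ = conj(λᵢ)·wᵢ`, `A† wⱼ = conj(λⱼ)·wⱼ` and `λᵢ + conj(λⱼ) ≠ 0`, then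
`⟨wᵢ, V wⱼ⟩ = −((λᵢ−q)(conj(λⱼ)−q)/(λᵢ+conj(λⱼ))) e^{λᵢτ} ⟨wᵢ, N wⱼ⟩`; moreover if `V₀`
satisfies the weak Lyapunov equation for `(A, N, q, 0)` then
`⟨wᵢ, V wⱼ⟩ = e^{λᵢτ} ⟨wᵢ, V₀ wⱼ⟩`. -/
theorem eigenfunction_autocovariance_formula
    {H : Type*} [NormedAddCommGroup H] [InnerProductSpace ℂ H] [CompleteSpace H]
    (A N V : H →L[ℂ] H) (q : ℝ) (τ : ℝ) (hτ : 0 ≤ τ)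
    (hV : WeakLyapunov A N V q τ)
    (wi wj : H) (li lj : ℂ)
    (hwi : (ContinuousLinearMap.adjoint A) wi = (starRingEnd ℂ) li • wi)
    (hwj : (ContinuousLinearMap.adjoint A) wj = (starRingEnd ℂ) lj • wj)
    (hsum : li + (starRingEnd ℂ) lj ≠ 0) :
    ⟪wi, V wj⟫
        = -((li - (q : ℂ)) * ((starRingEnd ℂ) lj - (q : ℂ)) / (li + (starRingEnd ℂ) lj))
            * Complex.exp (li * (τ : ℂ)) * ⟪wi, N wj⟫
    ∧ ∀ V₀ : H →L[ℂ] H, WeakLyapunov A N V₀ q 0 →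
        ⟪wi, V wj⟫ = Complex.exp (li * (τ : ℂ)) * ⟪wi, V₀ wj⟫ :=
  eigenfunction_autocovariance_formula_general A N V q τ hV wi wj li lj hwi hwj hsum
end

section
/- (Theorem 3.3(c), recursion for generalized eigenfunctions.) Let A and N be bounded linear operators on a complex Hilbert space H, q ∈ ℝ, τ ≥ 0, and let V be a bounded operator satisfying the weak Lyapunov equation for (A, N, q, τ). Let λ_i, λ_j ∈ ℂ with λ_i + conj(λ_j) ≠ 0, and let w_0 = 0, w_1, …, w_{K₁} ∈ H and u_0 = 0, u_1, …, u_{K₂} ∈ H be adjoint Jordan chains: A† w_k = conj(λ_i)·w_k + w_{k−1} for k = 1, …, K₁ and A† u_k = conj(λ_j)·u_k + u_{k−1} for k = 1, …, K₂. Then for all k₁ ∈ {1, …, K₁} and k₂ ∈ {1, …, K₂}: ⟨w_{k₁}, V u_{k₂}⟩ = −( ⟨w_{k₁}, V u_{k₂−1}⟩ + ⟨w_{k₁−1}, V u_{k₂}⟩ + e^{λ_i τ} · Σ_{k=1}^{k₁} (τ^{k₁−k}/(k₁−k)!) · ⟨(conj(λ_i) − q)·w_k + w_{k−1}, N((conj(λ_j)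 − q)·u_{k₂} + u_{k₂−1})⟩ ) / (λ_i + conj(λ_j)). -/
/-!
Pair the weak Lyapunov equation with `v = w k₁` and `w = u k₂`. Moving `A` across the inner
product and using the two Jordan relations turns the left-hand side into
`(λᵢ + conj λⱼ) ⟪w k₁, V u k₂⟫` plus the two lower-order terms. On the right, the adjoint of
`exp (τ A)` is `exp (τ A†)`, and on the chain `A† = conj λᵢ + S` with `S` the shift
`w k ↦ w (k - 1)`. Since `S` kills `w k₁` after `k₁` steps, the exponential series truncates:
`exp (τ A†) (w k₁) = e^{τ conj λᵢ} ∑ₖ τ^{k₁-k}/(k₁-k)! • w k`.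
-/

local notation "⟪" x ", " y "⟫" => @inner ℂ _ _ x y

open Finset Nat ContinuousLinearMap
open scoped InnerProductSpace

section JordanChain

variable {𝕜 E : Type*} [RCLike 𝕜] [NormedAddCommGroup E] [NormedSpace 𝕜 E]

theorem sub_smul_one_apply_of_apply_eq {B : E →L[𝕜] E} {μ : 𝕜} {x y : E}
    (h : B x = μ • x + y) (c : 𝕜) : (B - c • 1) x = (μ - c) • x + y := by
  rw [sub_apply, h, smul_apply, one_apply_eq_self, sub_smul]
  abel

theorem pow_sub_smul_one_apply_of_jordan_chain {B : E →L[𝕜] E} {μ : 𝕜} {K : ℕ} {w : ℕ → E}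
    (hw0 : w 0 = 0) (hw : ∀ k, 1 ≤ k → k ≤ K → B (w k) = μ • w k + w (k - 1)) (m : ℕ) :
    ∀ k ≤ K, ((B - μ • 1) ^ m) (w k) = w (k - m) := by
  induction m with
  | zero => simp
  | succ m ih =>
    intro k hk
    have hstep : (B - μ • 1) (w k) = w (k - 1) := by
      rcases Nat.eq_zero_or_pos k with rfl | hk₁
      · simp [hw0]
      · simpa using sub_smul_one_apply_of_apply_eq (hw k hk₁ hk) μ
    rw [pow_succ, mul_apply_eq_comp, hstep, ih (k - 1) (by omega), Nat.sub_sub, Nat.add_comm]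

theorem exp_apply_eq_sum_of_pow_apply_eq_zero [CompleteSpace E] (T : E →L[𝕜] E) {x : E} {m : ℕ}
    (h : ∀ n, m ≤ n → (T ^ n) x = 0) :
    NormedSpace.exp T x = ∑ n ∈ range m, (n ! : 𝕜)⁻¹ • (T ^ n) x := by
  refine ((NormedSpace.exp_series_hasSum_exp' (𝕂 := 𝕜) T).mapL (apply 𝕜 E x)).unique ?_
  refine hasSum_sum_of_ne_finset_zero fun n hn => ?_
  simp [h n (by simpa using hn)]

end JordanChain

theorem exp_smul_apply_of_jordan_chain {E : Type*} [NormedAddCommGroup E] [NormedSpace ℂ E]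
    [CompleteSpace E] {B : E →L[ℂ] E} {μ : ℂ} {K : ℕ} {w : ℕ → E}
    (hw0 : w 0 = 0) (hw : ∀ k, 1 ≤ k → k ≤ K → B (w k) = μ • w k + w (k - 1))
    (τ : ℂ) {k : ℕ} (hk : k ≤ K) :
    NormedSpace.exp (τ • B) (w k)
      = Complex.exp (τ * μ) • ∑ j ∈ Icc 1 k, (τ ^ (k - j) / (k - j) !) • w j := by
  have hsplit : τ • B = algebraMap ℂ (E →L[ℂ] E) (τ * μ) + τ • (B - μ • 1) := by
    rw [Algebra.algebraMap_eq_smul_one, smul_sub, smul_smul]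
    abel
  have hpow : ∀ n, ((τ • (B - μ • 1)) ^ n) (w k) = τ ^ n • w (k - n) := fun n => by
    rw [smul_pow, smul_apply, pow_sub_smul_one_apply_of_jordan_chain hw0 hw n k hk]
  have hball (T : E →L[ℂ] E) :
      T ∈ Metric.eball 0 (NormedSpace.expSeries ℂ (E →L[ℂ] E)).radius := by
    simp [NormedSpace.expSeries_radius_eq_top]
  rw [hsplit,
    NormedSpace.exp_add_of_commute_of_mem_ball (Algebra.commutes _ _) (hball _) (hball _),
    ← NormedSpace.algebraMap_exp_comm, ← Complex.exp_eq_exp_ℂ, Algebra.algebraMap_eq_smul_one,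
    smul_mul_assoc, one_mul, smul_apply,
    exp_apply_eq_sum_of_pow_apply_eq_zero (𝕜 := ℂ) _ (m := k) fun n hn => by
      rw [hpow, Nat.sub_eq_zero_of_le hn, hw0, smul_zero]]
  congr 1
  refine sum_nbij' (k - ·) (k - ·) ?_ ?_ ?_ ?_ ?_ <;> simp only [mem_range, mem_Icc, hpow]
  iterate 4 omega
  · intro n hn
    rw [smul_smul, Nat.sub_sub_self hn.le, div_eq_inv_mul]

section Adjoint

variable {𝕜 H : Type*} [RCLike 𝕜] [NormedAddCommGroup H] [InnerProductSpace 𝕜 H] [CompleteSpace H]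

theorem ContinuousLinearMap.adjoint_exp (T : H →L[𝕜] H) :
    adjoint (NormedSpace.exp T) = NormedSpace.exp (adjoint T) := by
  simpa only [star_eq_adjoint] using NormedSpace.star_exp T

theorem ContinuousLinearMap.adjoint_sub_smul_one (T : H →L[𝕜] H) (c : 𝕜) :
    adjoint (T - c • 1) = adjoint T - (starRingEnd 𝕜) c • 1 := by
  rw [map_sub, LinearIsometryEquiv.map_smulₛₗ, adjoint_one]

theorem inner_apply_of_adjoint_apply_eq {A : H →L[𝕜] H} {c : 𝕜} {v v' : H}
    (h : adjoint A v = (starRingEnd 𝕜) c • v + v') (x : H) :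
    ⟪v, A x⟫_𝕜 = c * ⟪v, x⟫_𝕜 + ⟪v', x⟫_𝕜 := by
  rw [← adjoint_inner_left, h, inner_add_left, inner_smul_left, RCLike.conj_conj]

end Adjoint

theorem inner_exp_ofReal_smul_apply_of_adjoint_jordan_chain {H : Type*} [NormedAddCommGroup H]
    [InnerProductSpace ℂ H] [CompleteSpace H] {A : H →L[ℂ] H} {l : ℂ} {K : ℕ} {w : ℕ → H}
    (hw0 : w 0 = 0)
    (hw : ∀ k, 1 ≤ k → k ≤ K → adjoint A (w k) = (starRingEnd ℂ) l • w k + w (k - 1))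
    (τ : ℝ) {k : ℕ} (hk : k ≤ K) (z : H) :
    ⟪w k, NormedSpace.exp ((τ : ℂ) • A) z⟫
      = Complex.exp (l * τ) * ∑ j ∈ Icc 1 k, ((τ : ℂ) ^ (k - j) / (k - j) !) * ⟪w j, z⟫ := by
  rw [← adjoint_inner_left, adjoint_exp, LinearIsometryEquiv.map_smulₛₗ, Complex.conj_ofReal,
    exp_smul_apply_of_jordan_chain hw0 hw _ hk, inner_smul_left, sum_inner, ← Complex.exp_conj]
  simp [inner_smul_left, mul_comm]

theorem generalized_eigenfunction_recursion_general
    {H : Type*} [NormedAddCommGroup H] [InnerProductSpace ℂ H] [CompleteSpace H]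
    (A N V : H →L[ℂ] H) (q : ℝ) (τ : ℝ)
    (hV : WeakLyapunov A N V q τ)
    (li lj : ℂ) (hsum : li + (starRingEnd ℂ) lj ≠ 0)
    (K₁ K₂ : ℕ)
    (w u : ℕ → H) (hw0 : w 0 = 0)
    (hw : ∀ k, 1 ≤ k → k ≤ K₁ →
      (ContinuousLinearMap.adjoint A) (w k) = (starRingEnd ℂ) li • w k + w (k - 1))
    (hu : ∀ k, 1 ≤ k → k ≤ K₂ →
      (ContinuousLinearMap.adjoint A) (u k) = (starRingEnd ℂ) lj • u k + u (k - 1)) :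
    ∀ k₁ k₂ : ℕ, 1 ≤ k₁ → k₁ ≤ K₁ → 1 ≤ k₂ → k₂ ≤ K₂ →
      ⟪w k₁, V (u k₂)⟫
        = -(⟪w k₁, V (u (k₂ - 1))⟫ + ⟪w (k₁ - 1), V (u k₂)⟫
            + Complex.exp (li * (τ : ℂ)) *
                ∑ k ∈ Finset.Icc 1 k₁,
                  (((τ : ℂ) ^ (k₁ - k)) / ((Nat.factorial (k₁ - k) : ℂ))) *
                    ⟪((starRingEnd ℂ) li - (q : ℂ)) • w k + w (k - 1),
                      N (((starRingEnd ℂ) lj - (q : ℂ)) • u k₂ + u (k₂ - 1))⟫)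
          / (li + (starRingEnd ℂ) lj) := by
  intro k₁ k₂ hk₁ hk₁K hk₂ hk₂K
  have hwq : ∀ k ∈ Icc 1 k₁, ∀ z, ⟪w k, (A - (q : ℂ) • 1) z⟫
      = ⟪((starRingEnd ℂ) li - q) • w k + w (k - 1), z⟫ := fun k hk z => by
    rw [mem_Icc] at hk
    rw [← adjoint_inner_left, adjoint_sub_smul_one, Complex.conj_ofReal,
      sub_smul_one_apply_of_apply_eq (hw k hk.1 (hk.2.trans hk₁K))]
  have key := hV (w k₁) (u k₂)
  rw [inner_apply_of_adjoint_apply_eq (hw k₁ hk₁ hk₁K), hu k₂ hk₂ hk₂K, map_add, map_smul,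
    inner_add_right, inner_smul_right] at key
  rw [sub_smul_one_apply_of_apply_eq (hu k₂ hk₂ hk₂K),
    inner_exp_ofReal_smul_apply_of_adjoint_jordan_chain hw0 hw τ hk₁K,
    sum_congr rfl fun k hk => congrArg _ (hwq k hk _)] at key
  rw [eq_div_iff hsum]
  linear_combination key

/-- (Theorem 3.3(c), recursion for generalized eigenfunctions.)  For adjoint
Jordan chains `w₀ = 0, w₁, …, w_{K₁}` for `conj(λᵢ)` and `u₀ = 0, u₁, …, u_{K₂}` for
`conj(λⱼ)` with `λᵢ + conj(λⱼ) ≠ 0`, a weak Lyapunov solution `V` satisfies, for all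
`k₁ ∈ {1,…,K₁}` and `k₂ ∈ {1,…,K₂}`:
`⟨w_{k₁}, V u_{k₂}⟩ = −(⟨w_{k₁}, V u_{k₂−1}⟩ + ⟨w_{k₁−1}, V u_{k₂}⟩ +
  e^{λᵢτ} Σ_{k=1}^{k₁} (τ^{k₁−k}/(k₁−k)!)
    ⟨(conj(λᵢ)−q)w_k + w_{k−1}, N((conj(λⱼ)−q)u_{k₂} + u_{k₂−1})⟩) / (λᵢ + conj(λⱼ))`. -/
theorem generalized_eigenfunction_recursion
    {H : Type*} [NormedAddCommGroup H] [InnerProductSpace ℂ H] [CompleteSpace H]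
    (A N V : H →L[ℂ] H) (q : ℝ) (τ : ℝ) (hτ : 0 ≤ τ)
    (hV : WeakLyapunov A N V q τ)
    (li lj : ℂ) (hsum : li + (starRingEnd ℂ) lj ≠ 0)
    (K₁ K₂ : ℕ) (hK₁ : 1 ≤ K₁) (hK₂ : 1 ≤ K₂)
    (w u : ℕ → H) (hw0 : w 0 = 0) (hu0 : u 0 = 0)
    (hw : ∀ k, 1 ≤ k → k ≤ K₁ →
      (ContinuousLinearMap.adjoint A) (w k) = (starRingEnd ℂ) li • w k + w (k - 1))
    (hu : ∀ k, 1 ≤ k → k ≤ K₂ →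
      (ContinuousLinearMap.adjoint A) (u k) = (starRingEnd ℂ) lj • u k + u (k - 1)) :
    ∀ k₁ k₂ : ℕ, 1 ≤ k₁ → k₁ ≤ K₁ → 1 ≤ k₂ → k₂ ≤ K₂ →
      ⟪w k₁, V (u k₂)⟫
        = -(⟪w k₁, V (u (k₂ - 1))⟫ + ⟪w (k₁ - 1), V (u k₂)⟫
            + Complex.exp (li * (τ : ℂ)) *
                ∑ k ∈ Finset.Icc 1 k₁,
                  (((τ : ℂ) ^ (k₁ - k)) / ((Nat.factorial (k₁ - k) : ℂ))) *
                    ⟪((starRingEnd ℂ) li - (q : ℂ)) • w k + w (k - 1),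
                      N (((starRingEnd ℂ) lj - (q : ℂ)) • u k₂ + u (k₂ - 1))⟫)
          / (li + (starRingEnd ℂ) lj) :=
  generalized_eigenfunction_recursion_general A N V q τ hV li lj hsum K₁ K₂ w u hw0 hw hu
end

section
/- (Theorem 3.3(d), scaling law along generalized eigenfunctions.) Let τ ≥ 0, p* ∈ ℝ, integers K₁, K₂ ≥ 1, indices k₁ ∈ {1, …, K₁}, k₂ ∈ {1, …, K₂}, and constants C⁻, C⁺ > 0. For each p < p*, let A(p), N(p), V(p) be bounded operators on a complex Hilbert space H and q(p) ∈ ℝ such that V(p) satisfies the weak Lyapunov equation for (A(p), N(p), q(p), τ); let λ_i(p), λ_j(p) ∈ ℂ and adjoint Jordan chains w_0(p) = 0, A(p)† w_k(p) = conj(λ_i(p))·w_k(p) + w_{k−1}(p) for k ≤ K₁, and u_0(p) = 0, A(p)† u_k(p) = conj(λ_j(p))·u_k(p) + u_{k−1}(p) for k ≤ K₂. Assume for all p < p*: |λ_i(p) − q(p)| ≥ C⁻, |λ_j(p) − q(p)| ≥ C⁻, |⟨w_1(p), N(p) u_1(p)⟩| ≥ C⁻; ‖N(p)‖ ≤ C⁺,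 ‖w_k(p)‖ ≤ C⁺ and ‖u_k(p)‖ ≤ C⁺ for all k, |λ_i(p)| ≤ C⁺, |λ_j(p)| ≤ C⁺, |q(p)| ≤ C⁺, Re λ_i(p) ≤ 0; and s(p) := λ_i(p) + conj(λ_j(p)) ≠ 0 with s(p) → 0 as p → p*⁻. Then there exist δ > 0 and constants 0 < c ≤ C such that for all p ∈ (p* − δ, p*): c·|s(p)|^{−(k₁+k₂−1)} ≤ |⟨w_{k₁}(p), V(p) u_{k₂}(p)⟩| ≤ C·|s(p)|^{−(k₁+k₂−1)}. -/
open Filter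

local notation "⟪" x ", " y "⟫" => @inner ℂ _ _ x y

/-! Write `s = λᵢ + conj λⱼ` and `X k l = ⟨w_k, V u_l⟩`. Testing the weak Lyapunov equation
against `w_{k+1}` and `u_{l+1}` and using the chain relations gives the recursion
`s X (k+1) (l+1) + X k (l+1) + X (k+1) l = F (k+1) (l+1)` with `X 0 l = X k 0 = 0`, where `F` is
the right-hand side of the equation. Moving `exp(τA)` and `A - q` to the left as adjoints,
`F k l = -⟨exp(τA†)(A† - q) w_k, N (A† - q) u_l⟩`; on a Jordan chain `exp(τA†)` is a finite
triangular sum, so `F` is bounded uniformly in `p`, and `|F 1 1|` is bounded below since `w₁`, `u₁`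
are eigenvectors. The coefficients `b k l = (-1)^(k+l) (k+l-2 choose k-1)` satisfy the same
recursion with `s = 0`, except for a unit source at `(1, 1)`, so `s^(k+l-1) X k l - b k l F 1 1`
satisfies it with a source of size `O(|s|)` and is itself `O(|s|)`. As `b k l ≠ 0`, the term
`b k l F 1 1` dominates once `s` is small. -/

structure IsJordanChain {E : Type*} [NormedAddCommGroup E] [NormedSpace ℂ E]
    (B : E →L[ℂ] E) (μ : ℂ) (K : ℕ) (x : ℕ → E) : Prop where
  zero : x 0 = 0
  apply_succ : ∀ k < K, B (x (k + 1)) = μ • x (k + 1) + x k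

namespace IsJordanChain

variable {E : Type*} [NormedAddCommGroup E] [NormedSpace ℂ E]
  {B : E →L[ℂ] E} {μ : ℂ} {K : ℕ} {x : ℕ → E}

theorem of_sub_one (h0 : x 0 = 0) (h : ∀ k, 1 ≤ k → k ≤ K → B (x k) = μ • x k + x (k - 1)) :
    IsJordanChain B μ K x :=
  ⟨h0, fun k hk => by simpa using h (k + 1) (by omega) hk⟩

theorem forall_norm_le (hx : IsJordanChain B μ K x) {C : ℝ} (hC : 0 ≤ C)
    (h : ∀ k, 1 ≤ k → k ≤ K → ‖x k‖ ≤ C) : ∀ j ≤ K, ‖x j‖ ≤ C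
  | 0, _ => by simpa [hx.zero] using hC
  | j + 1, hj => h (j + 1) (by omega) hj

theorem sub_smul_one_apply_succ (hx : IsJordanChain B μ K x) (c : ℂ) {k : ℕ} (hk : k < K) :
    (B - c • 1) (x (k + 1)) = (μ - c) • x (k + 1) + x k := by
  rw [sub_apply, hx.apply_succ k hk, smul_apply, one_apply_eq_self, sub_smul]
  abel

theorem sub_smul_one_apply (hx : IsJordanChain B μ K x) {k : ℕ} (hk : k ≤ K) :
    (B - μ • 1) (x k) = x (k - 1) := by
  cases k with
  | zero => simp [hx.zero]
  | succ k => simp [hx.sub_smul_one_apply_succ μ hk]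

theorem sub_smul_one_pow_apply (hx : IsJordanChain B μ K x) (n : ℕ) {k : ℕ} (hk : k ≤ K) :
    ((B - μ • 1) ^ n) (x k) = x (k - n) := by
  induction n with
  | zero => simp
  | succ n ih =>
    rw [pow_succ', mul_apply_eq_comp, ih, hx.sub_smul_one_apply (by omega)]
    rfl

theorem map_of_commute (hx : IsJordanChain B μ K x) {T : E →L[ℂ] E} (hT : Commute T B) :
    IsJordanChain B μ K (fun k => T (x k)) where
  zero := by simp [hx.zero]
  apply_succ k hk := by
    rw [← mul_apply_eq_comp, ← hT.eq, mul_apply_eq_comp, hx.apply_succ k hk, map_add, map_smul]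

theorem norm_sub_smul_one_apply_le (hx : IsJordanChain B μ K x) (c : ℂ) {C : ℝ}
    (hC : ∀ j ≤ K, ‖x j‖ ≤ C) {k : ℕ} (hk : k ≤ K) :
    ‖(B - c • 1) (x k)‖ ≤ (‖μ - c‖ + 1) * C := by
  have hC0 : 0 ≤ C := (norm_nonneg _).trans (hC 0 (Nat.zero_le _))
  cases k with
  | zero => simpa [hx.zero] using mul_nonneg (by positivity) hC0
  | succ k =>
    rw [hx.sub_smul_one_apply_succ c hk]
    calc ‖(μ - c) • x (k + 1) + x k‖ ≤ ‖μ - c‖ * ‖x (k + 1)‖ + ‖x k‖ :=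
          (norm_add_le _ _).trans_eq (by rw [norm_smul])
      _ ≤ ‖μ - c‖ * C + C := by gcongr <;> apply hC <;> omega
      _ = (‖μ - c‖ + 1) * C := by ring

variable [CompleteSpace E]

theorem exp_smul_apply (hx : IsJordanChain B μ K x) (τ : ℂ) {k : ℕ} (hk : k ≤ K) :
    NormedSpace.exp (τ • B) (x k)
      = Complex.exp (τ * μ) • ∑ m ∈ Finset.range k, (τ ^ m / m.factorial) • x (k - m) := by
  set C := B - μ • (1 : E →L[ℂ] E)
  have hsplit : τ • B = (τ * μ) • 1 + τ • C := by
    simp only [C, smul_sub, smul_smul]; abel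
  have hscalar : NormedSpace.exp ((τ * μ) • (1 : E →L[ℂ] E)) = Complex.exp (τ * μ) • 1 := by
    rw [← Algebra.algebraMap_eq_smul_one, ← NormedSpace.algebraMap_exp_comm,
      Complex.exp_eq_exp_ℂ, Algebra.algebraMap_eq_smul_one]
  have hnil : NormedSpace.exp (τ • C) (x k)
      = ∑ m ∈ Finset.range k, (τ ^ m / m.factorial) • x (k - m) := by
    rw [NormedSpace.exp_eq_tsum ℂ, ← ContinuousLinearMap.apply_apply (v := x k),
      (ContinuousLinearMap.apply ℂ E (x k)).map_tsum (NormedSpace.expSeries_summable' _)]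
    have hterm (m : ℕ) : ((m.factorial : ℂ)⁻¹ • (τ • C) ^ m) (x k)
        = (τ ^ m / m.factorial) • x (k - m) := by
      rw [smul_pow, smul_apply, smul_apply, hx.sub_smul_one_pow_apply m hk, smul_smul,
        div_eq_inv_mul]
    simp_rw [ContinuousLinearMap.apply_apply, hterm]
    refine tsum_eq_sum fun m hm => ?_
    rw [Nat.sub_eq_zero_of_le (by simpa using hm), hx.zero, smul_zero]
  have hexp_add := NormedSpace.exp_add_of_commute_of_mem_ball (𝕂 := ℂ)
    ((Commute.one_left C).smul_left (τ * μ) |>.smul_right τ)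
    ((NormedSpace.expSeries_radius_eq_top ℂ (E →L[ℂ] E)).symm ▸ edist_lt_top _ _)
    ((NormedSpace.expSeries_radius_eq_top ℂ (E →L[ℂ] E)).symm ▸ edist_lt_top _ _)
  rw [hsplit, hexp_add, mul_apply_eq_comp, hnil, hscalar]
  rfl

theorem exp_smul_apply_one (hx : IsJordanChain B μ K x) (τ : ℂ) (hK : 0 < K) :
    NormedSpace.exp (τ • B) (x 1) = Complex.exp (τ * μ) • x 1 := by
  simpa using hx.exp_smul_apply τ hK

theorem norm_exp_smul_apply_le (hx : IsJordanChain B μ K x) (τ : ℂ) {C : ℝ}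
    (hC : ∀ j ≤ K, ‖x j‖ ≤ C) {k : ℕ} (hk : k ≤ K) :
    ‖NormedSpace.exp (τ • B) (x k)‖ ≤ Real.exp (‖τ‖ * (‖μ‖ + 1)) * C := by
  have hC0 : 0 ≤ C := (norm_nonneg _).trans (hC 0 (Nat.zero_le _))
  have hsum : ‖∑ m ∈ Finset.range k, (τ ^ m / m.factorial) • x (k - m)‖
      ≤ Real.exp ‖τ‖ * C :=
    calc _ ≤ ∑ m ∈ Finset.range k, ‖τ‖ ^ m / m.factorial * C := by
          refine norm_sum_le_of_le _ fun m _ => ?_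
          rw [norm_smul, norm_div, norm_pow, Complex.norm_natCast]
          gcongr
          exact hC _ (by omega)
      _ = (∑ m ∈ Finset.range k, ‖τ‖ ^ m / m.factorial) * C := by rw [Finset.sum_mul]
      _ ≤ Real.exp ‖τ‖ * C := by gcongr; exact Real.sum_le_exp_of_nonneg (norm_nonneg τ) k
  rw [hx.exp_smul_apply τ hk, norm_smul, Complex.norm_exp, mul_add, mul_one, Real.exp_add,
    mul_assoc]
  gcongr
  exact (Complex.re_le_norm _).trans_eq (norm_mul τ μ)

end IsJordanChain

def jordanPairingCoeff : ℕ → ℕ → ℤ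
  | a + 1, c + 1 => (-1) ^ (a + c) * (a + c).choose a
  | _, _ => 0

@[simp] theorem jordanPairingCoeff_zero_left (l : ℕ) : jordanPairingCoeff 0 l = 0 := rfl

@[simp] theorem jordanPairingCoeff_zero_right (k : ℕ) : jordanPairingCoeff k 0 = 0 := by
  cases k <;> rfl

theorem jordanPairingCoeff_succ_succ (a c : ℕ) :
    jordanPairingCoeff (a + 1) (c + 1) = (-1) ^ (a + c) * (a + c).choose a := rfl

theorem jordanPairingCoeff_ne_zero (a c : ℕ) : jordanPairingCoeff (a + 1) (c + 1) ≠ 0 := by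
  rw [jordanPairingCoeff_succ_succ]
  exact mul_ne_zero (pow_ne_zero _ (by norm_num))
    (Int.natCast_ne_zero.mpr (Nat.choose_pos (by omega)).ne')

theorem jordanPairingCoeff_add_add (a c : ℕ) :
    jordanPairingCoeff (a + 1) (c + 1) + jordanPairingCoeff a (c + 1)
      + jordanPairingCoeff (a + 1) c = if a = 0 ∧ c = 0 then 1 else 0 := by
  rcases a with _ | a <;> rcases c with _ | c
  · rfl
  · simp [jordanPairingCoeff_succ_succ, pow_succ]
  · simp [jordanPairingCoeff_succ_succ, pow_succ]
  · simp only [jordanPairingCoeff_succ_succ, add_eq_zero, one_ne_zero, and_false, if_false]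
    rw [show a + 1 + (c + 1) = a + c + 1 + 1 by omega, show a + (c + 1) = a + c + 1 by omega,
      show a + 1 + c = a + c + 1 by omega, Nat.choose_succ_succ]
    push_cast
    ring

theorem norm_le_three_pow_mul_of_norm_add_add_le {F : Type*} [SeminormedAddCommGroup F]
    {K₁ K₂ : ℕ} {ε : ℝ} (hε : 0 ≤ ε) {e : ℕ → ℕ → F} (he0 : ∀ l, e 0 l = 0)
    (he0' : ∀ k, e k 0 = 0)
    (he : ∀ k < K₁, ∀ l < K₂, ‖e (k + 1) (l + 1) + e k (l + 1) + e (k + 1) l‖ ≤ ε) :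
    ∀ k ≤ K₁, ∀ l ≤ K₂, ‖e k l‖ ≤ 3 ^ (k + l) * ε := by
  intro k
  induction k with
  | zero => intro _ l _; simpa [he0] using hε
  | succ k ihk =>
    intro hk l
    induction l with
    | zero => intro _; simpa [he0'] using hε
    | succ l ihl =>
      intro hl
      have hsplit : e (k + 1) (l + 1) = (e (k + 1) (l + 1) + e k (l + 1) + e (k + 1) l)
          - e k (l + 1) - e (k + 1) l := by abel
      calc ‖e (k + 1) (l + 1)‖
          ≤ ε + 3 ^ (k + (l + 1)) * ε + 3 ^ (k + 1 + l) * ε := by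
            rw [hsplit]
            refine (norm_sub_le _ _).trans (add_le_add ((norm_sub_le _ _).trans ?_) ?_)
            · exact add_le_add (he k hk l hl) (ihk (by omega) (l + 1) hl)
            · exact ihl (by omega)
        _ ≤ 3 ^ (k + 1 + (l + 1)) * ε := by
            rw [show k + (l + 1) = k + l + 1 by omega, show k + 1 + l = k + l + 1 by omega,
              show k + 1 + (l + 1) = k + l + 1 + 1 by omega, pow_succ _ (k + l + 1)]
            nlinarith [one_le_pow₀ (M₀ := ℝ) (n := k + l + 1) (by norm_num : (1 : ℝ) ≤ 3)]

theorem norm_pow_mul_sub_jordanPairingCoeff_mul_le {K₁ K₂ : ℕ} {s : ℂ} (hs : ‖s‖ ≤ 1)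
    {X F : ℕ → ℕ → ℂ} {D : ℝ} (hD : 0 ≤ D) (hX0 : ∀ l, X 0 l = 0) (hX0' : ∀ k, X k 0 = 0)
    (hrec : ∀ k < K₁, ∀ l < K₂,
      s * X (k + 1) (l + 1) + X k (l + 1) + X (k + 1) l = F (k + 1) (l + 1))
    (hF : ∀ k < K₁, ∀ l < K₂, ‖F (k + 1) (l + 1)‖ ≤ D) :
    ∀ k ≤ K₁, ∀ l ≤ K₂,
      ‖s ^ (k + l - 1) * X k l - jordanPairingCoeff k l * F 1 1‖ ≤ 3 ^ (k + l) * (D * ‖s‖) := by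
  refine norm_le_three_pow_mul_of_norm_add_add_le (by positivity) (by simp [hX0])
    (by simp [hX0']) fun k hk l hl => ?_
  have hsum : s ^ (k + 1 + (l + 1) - 1) * X (k + 1) (l + 1)
        - jordanPairingCoeff (k + 1) (l + 1) * F 1 1
      + (s ^ (k + (l + 1) - 1) * X k (l + 1) - jordanPairingCoeff k (l + 1) * F 1 1)
      + (s ^ (k + 1 + l - 1) * X (k + 1) l - jordanPairingCoeff (k + 1) l * F 1 1)
      = s ^ (k + l) * F (k + 1) (l + 1) - (if k = 0 ∧ l = 0 then 1 else 0) * F 1 1 := by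
    have hcoeff := congrArg (fun z : ℤ => (z : ℂ)) (jordanPairingCoeff_add_add k l)
    push_cast at hcoeff
    rw [show k + 1 + (l + 1) - 1 = k + l + 1 by omega, show k + (l + 1) - 1 = k + l by omega,
      show k + 1 + l - 1 = k + l by omega, ← hrec k hk l hl]
    linear_combination (-F 1 1) * hcoeff
  rw [hsum]
  split_ifs with h0
  · simpa [h0.1, h0.2] using mul_nonneg hD (norm_nonneg s)
  · calc ‖s ^ (k + l) * F (k + 1) (l + 1) - 0 * F 1 1‖
          = ‖s‖ ^ (k + l) * ‖F (k + 1) (l + 1)‖ := by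
            rw [zero_mul, sub_zero, norm_mul, norm_pow]
      _ ≤ ‖s‖ * D := by
          gcongr
          · exact pow_le_of_le_one (norm_nonneg s) hs (by omega)
          · exact hF k hk l hl
      _ = D * ‖s‖ := mul_comm _ _

section Lyapunov

variable {H : Type*} [NormedAddCommGroup H] [InnerProductSpace ℂ H] [CompleteSpace H]

open ContinuousLinearMap

noncomputable def lyapunovForcing (A N : H →L[ℂ] H) (q τ : ℝ) (v w : H) : ℂ :=
  -⟪v, NormedSpace.exp ((τ : ℂ) • A) ((A - (q : ℂ) • 1) (N ((adjoint A - (q : ℂ) • 1) w)))⟫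

theorem lyapunovForcing_eq (A N : H →L[ℂ] H) (q τ : ℝ) (v w : H) :
    lyapunovForcing A N q τ v w
      = -⟪NormedSpace.exp ((τ : ℂ) • adjoint A) ((adjoint A - (q : ℂ) • 1) v),
          N ((adjoint A - (q : ℂ) • 1) w)⟫ := by
  have hadj_sub : adjoint (A - (q : ℂ) • 1) = adjoint A - (q : ℂ) • 1 := by
    rw [← star_eq_adjoint, star_sub, star_smul, star_one, star_eq_adjoint, RCLike.star_def,
      Complex.conj_ofReal]
  have hadj_exp : adjoint (NormedSpace.exp ((τ : ℂ) • A))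
      = NormedSpace.exp ((τ : ℂ) • adjoint A) := by
    rw [← star_eq_adjoint, NormedSpace.star_exp, star_smul, star_eq_adjoint, RCLike.star_def,
      Complex.conj_ofReal]
  have hcomm : Commute (adjoint A - (q : ℂ) • 1) (NormedSpace.exp ((τ : ℂ) • adjoint A)) :=
    (((Commute.refl _).sub_left ((Commute.one_left _).smul_left _)).smul_right _).exp_right
  rw [lyapunovForcing, ← adjoint_inner_left, ← adjoint_inner_left, hadj_sub, hadj_exp,
    ← mul_apply_eq_comp, hcomm.eq, mul_apply_eq_comp]

variable {A N V : H →L[ℂ] H} {q τ : ℝ} {K₁ K₂ : ℕ} {w u : ℕ → H}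

theorem WeakLyapunov.inner_chain_recursion {li lj : ℂ} (hV : WeakLyapunov A N V q τ)
    (hw : IsJordanChain (adjoint A) (starRingEnd ℂ li) K₁ w)
    (hu : IsJordanChain (adjoint A) (starRingEnd ℂ lj) K₂ u) {k l : ℕ} (hk : k < K₁)
    (hl : l < K₂) :
    (li + starRingEnd ℂ lj) * ⟪w (k + 1), V (u (l + 1))⟫ + ⟪w k, V (u (l + 1))⟫
        + ⟪w (k + 1), V (u l)⟫
      = lyapunovForcing A N q τ (w (k + 1)) (u (l + 1)) := by
  have h := hV (w (k + 1)) (u (l + 1))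
  rw [← adjoint_inner_left, hw.apply_succ k hk, hu.apply_succ l hl, map_add, map_smul,
    inner_add_left, inner_smul_left, inner_add_right, inner_smul_right,
    Complex.conj_conj] at h
  rw [lyapunovForcing, ← h]
  ring

theorem norm_lyapunovForcing_le {α β : ℂ} {C : ℝ} (hw : IsJordanChain (adjoint A) α K₁ w)
    (hu : IsJordanChain (adjoint A) β K₂ u) (hwC : ∀ j ≤ K₁, ‖w j‖ ≤ C)
    (huC : ∀ j ≤ K₂, ‖u j‖ ≤ C) {k l : ℕ} (hk : k ≤ K₁) (hl : l ≤ K₂) :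
    ‖lyapunovForcing A N q τ (w k) (u l)‖
      ≤ Real.exp (|τ| * (‖α‖ + 1)) * ((‖α - q‖ + 1) * C) * (‖N‖ * ((‖β - q‖ + 1) * C)) := by
  have hC0 : 0 ≤ C := (norm_nonneg _).trans (hwC 0 (Nat.zero_le _))
  have hcomm : Commute (adjoint A - (q : ℂ) • 1) (adjoint A) :=
    (Commute.refl _).sub_left ((Commute.one_left _).smul_left _)
  have hexp := (hw.map_of_commute hcomm).norm_exp_smul_apply_le (τ : ℂ)
    (fun j hj => hw.norm_sub_smul_one_apply_le q hwC hj) hk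
  rw [Complex.norm_real, Real.norm_eq_abs] at hexp
  rw [lyapunovForcing_eq, norm_neg]
  refine (norm_inner_le_norm _ _).trans (mul_le_mul hexp ?_ (norm_nonneg _) (by positivity))
  exact (N.le_opNorm _).trans (by gcongr; exact hu.norm_sub_smul_one_apply_le q huC hl)

theorem norm_lyapunovForcing_one_one {α β : ℂ} (hw : IsJordanChain (adjoint A) α K₁ w)
    (hu : IsJordanChain (adjoint A) β K₂ u) (hK₁ : 0 < K₁) (hK₂ : 0 < K₂) :
    ‖lyapunovForcing A N q τ (w 1) (u 1)‖
      = Real.exp (τ * α.re) * ‖α - q‖ * ‖β - q‖ * ‖⟪w 1, N (u 1)⟫‖ := by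
  rw [lyapunovForcing_eq, hw.sub_smul_one_apply_succ q hK₁, hu.sub_smul_one_apply_succ q hK₂,
    hw.zero, hu.zero, add_zero, add_zero, map_smul, hw.exp_smul_apply_one _ hK₁, map_smul,
    inner_smul_left, inner_smul_left, inner_smul_right, norm_neg, norm_mul, norm_mul, norm_mul,
    RCLike.norm_conj, RCLike.norm_conj, Complex.norm_exp, Complex.re_ofReal_mul]
  ring

theorem norm_lyapunovForcing_le_of_le {li lj : ℂ} {C : ℝ}
    (hw : IsJordanChain (adjoint A) (starRingEnd ℂ li) K₁ w)
    (hu : IsJordanChain (adjoint A) (starRingEnd ℂ lj) K₂ u) (hN : ‖N‖ ≤ C) (hli : ‖li‖ ≤ C)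
    (hlj : ‖lj‖ ≤ C) (hq : |q| ≤ C) (hwC : ∀ j ≤ K₁, ‖w j‖ ≤ C) (huC : ∀ j ≤ K₂, ‖u j‖ ≤ C)
    {k l : ℕ} (hk : k ≤ K₁) (hl : l ≤ K₂) :
    ‖lyapunovForcing A N q τ (w k) (u l)‖
      ≤ Real.exp (|τ| * (C + 1)) * ((2 * C + 1) * C) * (C * ((2 * C + 1) * C)) := by
  have hC0 : 0 ≤ C := (norm_nonneg _).trans hN
  have hsub (z : ℂ) (hz : ‖z‖ ≤ C) : ‖starRingEnd ℂ z - q‖ ≤ 2 * C :=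
    calc ‖starRingEnd ℂ z - q‖ ≤ ‖z‖ + |q| := by
          simpa [RCLike.norm_conj, Complex.norm_real] using norm_sub_le (starRingEnd ℂ z) (q : ℂ)
      _ ≤ 2 * C := by linarith
  refine (norm_lyapunovForcing_le hw hu hwC huC hk hl).trans ?_
  gcongr
  · exact (RCLike.norm_conj li).trans_le hli
  · exact hsub li hli
  · exact hsub lj hlj

theorem le_norm_lyapunovForcing_one_one {li lj : ℂ} {c C : ℝ}
    (hw : IsJordanChain (adjoint A) (starRingEnd ℂ li) K₁ w)
    (hu : IsJordanChain (adjoint A) (starRingEnd ℂ lj) K₂ u) (hK₁ : 0 < K₁) (hK₂ : 0 < K₂)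
    (hc : 0 ≤ c) (hli : ‖li‖ ≤ C) (hliq : c ≤ ‖li - q‖) (hljq : c ≤ ‖lj - q‖)
    (hN1 : c ≤ ‖⟪w 1, N (u 1)⟫‖) :
    Real.exp (-(|τ| * C)) * c ^ 3 ≤ ‖lyapunovForcing A N q τ (w 1) (u 1)‖ := by
  have hconj (z : ℂ) : ‖starRingEnd ℂ z - q‖ = ‖z - q‖ := by
    simpa using RCLike.norm_conj (z - q)
  have hexp : -(|τ| * C) ≤ τ * li.re :=
    calc -(|τ| * C) ≤ -(|τ| * |li.re|) := by
          gcongr; exact (Complex.abs_re_le_norm li).trans hli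
      _ = -|τ * li.re| := by rw [abs_mul]
      _ ≤ τ * li.re := neg_abs_le _
  rw [norm_lyapunovForcing_one_one hw hu hK₁ hK₂, hconj, hconj, Complex.conj_re]
  calc Real.exp (-(|τ| * C)) * c ^ 3 = Real.exp (-(|τ| * C)) * c * c * c := by ring
    _ ≤ _ := by gcongr

theorem WeakLyapunov.pairing_scaling {li lj : ℂ} {k₁ k₂ : ℕ} {D r : ℝ}
    (hV : WeakLyapunov A N V q τ) (hw : IsJordanChain (adjoint A) (starRingEnd ℂ li) K₁ w)
    (hu : IsJordanChain (adjoint A) (starRingEnd ℂ lj) K₂ u) (hk₁ : 1 ≤ k₁) (hk₁K : k₁ ≤ K₁)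
    (hk₂ : 1 ≤ k₂) (hk₂K : k₂ ≤ K₂)
    (hD : ∀ k < K₁, ∀ l < K₂, ‖lyapunovForcing A N q τ (w (k + 1)) (u (l + 1))‖ ≤ D)
    (hr : r ≤ ‖lyapunovForcing A N q τ (w 1) (u 1)‖) (hs : li + starRingEnd ℂ lj ≠ 0)
    (hs1 : ‖li + starRingEnd ℂ lj‖ ≤ 1)
    (hsmall : 3 ^ (k₁ + k₂) * (D * ‖li + starRingEnd ℂ lj‖) ≤ r / 2) :
    r / 2 * ‖li + starRingEnd ℂ lj‖ ^ (-((k₁ : ℤ) + k₂ - 1)) ≤ ‖⟪w k₁, V (u k₂)⟫‖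
      ∧ ‖⟪w k₁, V (u k₂)⟫‖
        ≤ (‖(jordanPairingCoeff k₁ k₂ : ℂ)‖ * D + r / 2)
          * ‖li + starRingEnd ℂ lj‖ ^ (-((k₁ : ℤ) + k₂ - 1)) := by
  set s := li + starRingEnd ℂ lj
  set F₁₁ := lyapunovForcing A N q τ (w 1) (u 1)
  set b : ℂ := (jordanPairingCoeff k₁ k₂ : ℂ)
  have hF₁₁ : ‖F₁₁‖ ≤ D := hD 0 (by omega) 0 (by omega)
  have happrox : ‖s ^ (k₁ + k₂ - 1) * ⟪w k₁, V (u k₂)⟫ - b * F₁₁‖ ≤ r / 2 :=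
    (norm_pow_mul_sub_jordanPairingCoeff_mul_le (X := fun k l => ⟪w k, V (u l)⟫)
      (F := fun k l => lyapunovForcing A N q τ (w k) (u l)) hs1 ((norm_nonneg _).trans hF₁₁)
      (fun l => by simp [hw.zero]) (fun k => by simp [hu.zero])
      (fun k hk l hl => hV.inner_chain_recursion hw hu hk hl) hD k₁ hk₁K k₂ hk₂K).trans hsmall
  have hb : 1 ≤ ‖b‖ := by
    obtain ⟨a, rfl⟩ : ∃ a, k₁ = a + 1 := ⟨k₁ - 1, by omega⟩
    obtain ⟨c, rfl⟩ : ∃ c, k₂ = c + 1 := ⟨k₂ - 1, by omega⟩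
    rw [Complex.norm_intCast]
    exact_mod_cast Int.one_le_abs (jordanPairingCoeff_ne_zero a c)
  have hbF_lower : r ≤ ‖b * F₁₁‖ := by
    rw [norm_mul]
    nlinarith [norm_nonneg F₁₁]
  have hbF_upper : ‖b * F₁₁‖ ≤ ‖b‖ * D := by
    rw [norm_mul]
    gcongr
  have hpow : 0 < ‖s‖ ^ (k₁ + k₂ - 1) := pow_pos (norm_pos_iff.mpr hs) _
  have hnorm : ‖s ^ (k₁ + k₂ - 1) * ⟪w k₁, V (u k₂)⟫‖
      = ‖s‖ ^ (k₁ + k₂ - 1) * ‖⟪w k₁, V (u k₂)⟫‖ := by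
    rw [norm_mul, norm_pow]
  have hclose := abs_le.mp ((abs_norm_sub_norm_le _ _).trans happrox)
  rw [hnorm] at hclose
  rw [show -((k₁ : ℤ) + k₂ - 1) = -((k₁ + k₂ - 1 : ℕ) : ℤ) by omega, zpow_neg, zpow_natCast,
    ← div_eq_mul_inv, ← div_eq_mul_inv, div_le_iff₀ hpow, le_div_iff₀ hpow]
  constructor <;> linarith

end Lyapunov

theorem exists_forall_norm_le_of_tendsto_nhdsLT {E : Type*} [SeminormedAddCommGroup E]
    {f : ℝ → E} {x ε : ℝ} (hf : Tendsto f (nhdsWithin x (Set.Iio x)) (nhds 0)) (hε : 0 < ε) :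
    ∃ δ > 0, ∀ p, x - δ < p → p < x → ‖f p‖ ≤ ε := by
  obtain ⟨l, hl, hsub⟩ := mem_nhdsLT_iff_exists_Ioo_subset.mp
    (hf (Metric.closedBall_mem_nhds 0 hε))
  exact ⟨x - l, sub_pos.mpr hl, fun p hp₁ hp₂ => by
    simpa using hsub ⟨by linarith, hp₂⟩⟩

theorem generalized_eigenfunction_scaling_law_general
    {H : Type*} [NormedAddCommGroup H] [InnerProductSpace ℂ H] [CompleteSpace H]
    (τ : ℝ) (pstar : ℝ)
    (K₁ K₂ k₁ k₂ : ℕ) (hk₁ : 1 ≤ k₁) (hk₁K : k₁ ≤ K₁) (hk₂ : 1 ≤ k₂) (hk₂K : k₂ ≤ K₂)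
    (Cm Cp : ℝ) (hCm : 0 < Cm) (hCp : 0 < Cp)
    (A N V : ℝ → (H →L[ℂ] H)) (q : ℝ → ℝ) (li lj : ℝ → ℂ)
    (w u : ℝ → ℕ → H)
    (hLyap : ∀ p < pstar, WeakLyapunov (A p) (N p) (V p) (q p) τ)
    (hw0 : ∀ p < pstar, w p 0 = 0) (hu0 : ∀ p < pstar, u p 0 = 0)
    (hw : ∀ p < pstar, ∀ k, 1 ≤ k → k ≤ K₁ →
      (ContinuousLinearMap.adjoint (A p)) (w p k)
        = (starRingEnd ℂ) (li p) • w p k + w p (k - 1))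
    (hu : ∀ p < pstar, ∀ k, 1 ≤ k → k ≤ K₂ →
      (ContinuousLinearMap.adjoint (A p)) (u p k)
        = (starRingEnd ℂ) (lj p) • u p k + u p (k - 1))
    (hqi : ∀ p < pstar, Cm ≤ ‖li p - (q p : ℂ)‖)
    (hqj : ∀ p < pstar, Cm ≤ ‖lj p - (q p : ℂ)‖)
    (hN1 : ∀ p < pstar, Cm ≤ ‖⟪w p 1, (N p) (u p 1)⟫‖)
    (hNnorm : ∀ p < pstar, ‖N p‖ ≤ Cp)
    (hwnorm : ∀ p < pstar, ∀ k, 1 ≤ k → k ≤ K₁ → ‖w p k‖ ≤ Cp)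
    (hunorm : ∀ p < pstar, ∀ k, 1 ≤ k → k ≤ K₂ → ‖u p k‖ ≤ Cp)
    (hli : ∀ p < pstar, ‖li p‖ ≤ Cp)
    (hlj : ∀ p < pstar, ‖lj p‖ ≤ Cp)
    (hqb : ∀ p < pstar, |q p| ≤ Cp)
    (hs : ∀ p < pstar, li p + (starRingEnd ℂ) (lj p) ≠ 0)
    (hs0 : Tendsto (fun p => li p + (starRingEnd ℂ) (lj p))
      (nhdsWithin pstar (Set.Iio pstar)) (nhds 0)) :
    ∃ δ > 0, ∃ c C : ℝ, 0 < c ∧ c ≤ C ∧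
      ∀ p : ℝ, pstar - δ < p → p < pstar →
        c * ‖li p + (starRingEnd ℂ) (lj p)‖ ^ (-((k₁ : ℤ) + (k₂ : ℤ) - 1))
            ≤ ‖⟪w p k₁, (V p) (u p k₂)⟫‖
        ∧ ‖⟪w p k₁, (V p) (u p k₂)⟫‖
            ≤ C * ‖li p + (starRingEnd ℂ) (lj p)‖ ^ (-((k₁ : ℤ) + (k₂ : ℤ) - 1)) := by
  set D := Real.exp (|τ| * (Cp + 1)) * ((2 * Cp + 1) * Cp) * (Cp * ((2 * Cp + 1) * Cp))
  set r := Real.exp (-(|τ| * Cp)) * Cm ^ 3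
  have hD : 0 < D := by positivity
  obtain ⟨δ, hδ, hclose⟩ := exists_forall_norm_le_of_tendsto_nhdsLT hs0
    (show 0 < min 1 (r / (2 * 3 ^ (k₁ + k₂) * D)) by positivity)
  refine ⟨δ, hδ, r / 2, ‖(jordanPairingCoeff k₁ k₂ : ℂ)‖ * D + r / 2, by positivity,
    le_add_of_nonneg_left (by positivity), fun p hp₁ hp₂ => ?_⟩
  have hwp := IsJordanChain.of_sub_one (hw0 p hp₂) (hw p hp₂)
  have hup := IsJordanChain.of_sub_one (hu0 p hp₂) (hu p hp₂)
  have hs_le := hclose p hp₁ hp₂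
  refine (hLyap p hp₂).pairing_scaling hwp hup hk₁ hk₁K hk₂ hk₂K
    (fun k hk l hl => norm_lyapunovForcing_le_of_le hwp hup (hNnorm p hp₂) (hli p hp₂)
      (hlj p hp₂) (hqb p hp₂) (hwp.forall_norm_le hCp.le (hwnorm p hp₂))
      (hup.forall_norm_le hCp.le (hunorm p hp₂)) hk hl)
    (le_norm_lyapunovForcing_one_one hwp hup (by omega) (by omega) hCm.le (hli p hp₂)
      (hqi p hp₂) (hqj p hp₂) (hN1 p hp₂))
    (hs p hp₂) (hs_le.trans (min_le_left _ _)) ?_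
  calc _ ≤ 3 ^ (k₁ + k₂) * (D * (r / (2 * 3 ^ (k₁ + k₂) * D))) := by
        gcongr; exact hs_le.trans (min_le_right _ _)
    _ = r / 2 := by field_simp

/-- (Theorem 3.3(d), scaling law along generalized eigenfunctions.)
Along a family of weak Lyapunov solutions with adjoint Jordan chains for `conj(λᵢ(p))` and
`conj(λⱼ(p))`, uniform bounds as stated, and `s(p) := λᵢ(p) + conj(λⱼ(p)) ≠ 0` with
`s(p) → 0` as `p → p*⁻`, the pairing `|⟨w_{k₁}(p), V(p) u_{k₂}(p)⟩|` scales as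
`|s(p)|^{−(k₁+k₂−1)}` near `p*`. -/
theorem generalized_eigenfunction_scaling_law
    {H : Type*} [NormedAddCommGroup H] [InnerProductSpace ℂ H] [CompleteSpace H]
    (τ : ℝ) (hτ : 0 ≤ τ) (pstar : ℝ)
    (K₁ K₂ k₁ k₂ : ℕ) (hk₁ : 1 ≤ k₁) (hk₁K : k₁ ≤ K₁) (hk₂ : 1 ≤ k₂) (hk₂K : k₂ ≤ K₂)
    (Cm Cp : ℝ) (hCm : 0 < Cm) (hCp : 0 < Cp)
    (A N V : ℝ → (H →L[ℂ] H)) (q : ℝ → ℝ) (li lj : ℝ → ℂ)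
    (w u : ℝ → ℕ → H)
    (hLyap : ∀ p < pstar, WeakLyapunov (A p) (N p) (V p) (q p) τ)
    (hw0 : ∀ p < pstar, w p 0 = 0) (hu0 : ∀ p < pstar, u p 0 = 0)
    (hw : ∀ p < pstar, ∀ k, 1 ≤ k → k ≤ K₁ →
      (ContinuousLinearMap.adjoint (A p)) (w p k)
        = (starRingEnd ℂ) (li p) • w p k + w p (k - 1))
    (hu : ∀ p < pstar, ∀ k, 1 ≤ k → k ≤ K₂ →
      (ContinuousLinearMap.adjoint (A p)) (u p k)
        = (starRingEnd ℂ) (lj p) • u p k + u p (k - 1))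
    (hqi : ∀ p < pstar, Cm ≤ ‖li p - (q p : ℂ)‖)
    (hqj : ∀ p < pstar, Cm ≤ ‖lj p - (q p : ℂ)‖)
    (hN1 : ∀ p < pstar, Cm ≤ ‖⟪w p 1, (N p) (u p 1)⟫‖)
    (hNnorm : ∀ p < pstar, ‖N p‖ ≤ Cp)
    (hwnorm : ∀ p < pstar, ∀ k, 1 ≤ k → k ≤ K₁ → ‖w p k‖ ≤ Cp)
    (hunorm : ∀ p < pstar, ∀ k, 1 ≤ k → k ≤ K₂ → ‖u p k‖ ≤ Cp)
    (hli : ∀ p < pstar, ‖li p‖ ≤ Cp)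
    (hlj : ∀ p < pstar, ‖lj p‖ ≤ Cp)
    (hqb : ∀ p < pstar, |q p| ≤ Cp)
    (hre : ∀ p < pstar, (li p).re ≤ 0)
    (hs : ∀ p < pstar, li p + (starRingEnd ℂ) (lj p) ≠ 0)
    (hs0 : Tendsto (fun p => li p + (starRingEnd ℂ) (lj p))
      (nhdsWithin pstar (Set.Iio pstar)) (nhds 0)) :
    ∃ δ > 0, ∃ c C : ℝ, 0 < c ∧ c ≤ C ∧
      ∀ p : ℝ, pstar - δ < p → p < pstar →
        c * ‖li p + (starRingEnd ℂ) (lj p)‖ ^ (-((k₁ : ℤ) + (k₂ : ℤ) - 1))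
            ≤ ‖⟪w p k₁, (V p) (u p k₂)⟫‖
        ∧ ‖⟪w p k₁, (V p) (u p k₂)⟫‖
            ≤ C * ‖li p + (starRingEnd ℂ) (lj p)‖ ^ (-((k₁ : ℤ) + (k₂ : ℤ) - 1)) :=
  generalized_eigenfunction_scaling_law_general τ pstar K₁ K₂ k₁ k₂ hk₁ hk₁K hk₂ hk₂K Cm Cp hCm hCp
    A N V q li lj w u hLyap hw0 hu0 hw hu hqi hqj hN1 hNnorm hwnorm hunorm hli hlj hqb hs hs0
end

section
/- (Theorem 3.4(c), scaling law of the autocovariance along general directions.) Under exactly the hypotheses of Theorem 3.4(b) — families A(p), N(p), V(p), q(p) with V(p) satisfying the weak Lyapunov equation for (A(p), N(p), q(p), τ), a dominant adjoint Jordan chain w_1(p), …, w_{M₁}(p) for conj(Λ(p)) with Re Λ(p) < 0 and Re Λ(p) → 0 as p → p*⁻, the uniform bounds |Λ(p) − q(p)| ≥ C⁻, |⟨w_1(p), N(p) w_1(p)⟩| ≥ C⁻, ‖N(p)‖ ≤ C⁺, ‖w_k(p)‖ ≤ C⁺, |Λ(p)| ≤ C⁺, |q(p)| ≤ C⁺,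 families f_m(p) = Σ_{k=1}^{M₁} c_{m,k}(p)·w_k(p) + r_m(p) with c_{m,k} continuous at p*, uniformly bounded remainder pairings, k_m* := max{k : c_{m,k}(p*) ≠ 0} well defined and c_{m,k} ≡ 0 for k > k_m* — there exist δ > 0 and constants 0 < c ≤ C such that for all p ∈ (p* − δ, p*): c·(−Re Λ(p))^{−(k₁*+k₂*−1)} ≤ |⟨f₁(p), V(p) f₂(p)⟩| ≤ C·(−Re Λ(p))^{−(k₁*+k₂*−1)}. -/
/-!
Pairing the weak Lyapunov equation with the adjoint Jordan chain gives, for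
`G j k = ⟨w_j, V w_k⟩` and `μ = -2 Re Λ`, the discrete recursion
`μ G j k = G (j-1) k + G j (k-1) + R j k`, whose forcing `R j k = ⟨w_j, S w_k⟩` (`S` the
right-hand side operator of the Lyapunov equation) is uniformly bounded, while `|R 1 1|` is bounded
below by `e^{-τ C⁺} (C⁻)³`. Solving the recursion along lattice paths gives
`μ^(j+k-1) G j k = binom(j+k-2, j-1) R 1 1 + O(μ)`. Expanding `⟨f₁, V f₂⟩` along the chain,
after multiplication by `μ^(k₁*+k₂*-1)` every term except `(k₁*, k₂*)` is `O(μ)`, and that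
one stays between two positive constants, because the coefficients `c_{m,k_m*}` are continuous
and nonzero at `p*`.
-/

open Filter

local notation "⟪" x ", " y "⟫" => @inner ℂ _ _ x y

open Finset Topology
open scoped Nat

section JordanChain

variable {E : Type*} [NormedAddCommGroup E] [NormedSpace ℂ E]
  {B : E →L[ℂ] E} {ζ : ℂ} {M : ℕ} {w : ℕ → E}

theorem pow_sub_smul_one_apply_of_chain (hw₀ : w 0 = 0)
    (hchain : ∀ k, 1 ≤ k → k ≤ M → B (w k) = ζ • w k + w (k - 1)) (n : ℕ) {k : ℕ}
    (hk : k ≤ M) : ((B - ζ • 1) ^ n) (w k) = w (k - n) := by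
  have hstep : ∀ k ≤ M, (B - ζ • 1) (w k) = w (k - 1) := by
    intro k hk
    rcases Nat.eq_zero_or_pos k with rfl | hk₁
    · simp [hw₀]
    · simp [hchain k hk₁ hk]
  induction n generalizing k with
  | zero => simp
  | succ n ih =>
    rw [pow_succ, mul_apply_eq_comp, hstep k hk, ih (by omega), Nat.sub_sub, add_comm 1 n]

variable [CompleteSpace E]

theorem exp_smul_apply_of_chain (hw₀ : w 0 = 0)
    (hchain : ∀ k, 1 ≤ k → k ≤ M → B (w k) = ζ • w k + w (k - 1)) (τ : ℂ) {k : ℕ}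
    (hk : k ≤ M) :
    NormedSpace.exp (τ • B) (w k)
      = Complex.exp (τ * ζ) • ∑ i ∈ range k, (τ ^ i / i !) • w (k - i) := by
  have hsplit : NormedSpace.exp (τ • B)
      = Complex.exp (τ * ζ) • NormedSpace.exp (τ • (B - ζ • 1)) := by
    have hcomm : Commute ((τ * ζ) • (1 : E →L[ℂ] E)) (τ • (B - ζ • 1)) :=
      ((Commute.one_left _).smul_left _).smul_right _
    have hball : ∀ x : E →L[ℂ] E,
        x ∈ Metric.eball 0 (NormedSpace.expSeries ℂ (E →L[ℂ] E)).radius :=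
      fun x => (NormedSpace.expSeries_radius_eq_top ℂ (E →L[ℂ] E)).symm ▸ edist_lt_top _ _
    rw [show τ • B = (τ * ζ) • (1 : E →L[ℂ] E) + τ • (B - ζ • 1) by module,
      NormedSpace.exp_add_of_commute_of_mem_ball (𝕂 := ℂ) hcomm (hball _) (hball _),
      Algebra.smul_def (τ * ζ) (1 : E →L[ℂ] E), mul_one, ← NormedSpace.algebraMap_exp_comm,
      ← Complex.exp_eq_exp_ℂ]
    exact (Algebra.smul_def _ _).symm
  have hseries : NormedSpace.exp (τ • (B - ζ • 1)) (w k)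
      = ∑' n : ℕ, (τ ^ n / n !) • w (k - n) := by
    simp only [NormedSpace.exp_eq_tsum ℂ]
    refine ((ContinuousLinearMap.apply ℂ E (w k)).map_tsum
      (NormedSpace.expSeries_summable' _)).trans ?_
    refine congrArg tsum (funext fun n => ?_)
    simp [smul_pow, pow_sub_smul_one_apply_of_chain hw₀ hchain n hk, smul_smul, div_eq_inv_mul]
  rw [hsplit, smul_apply, hseries, tsum_eq_sum]
  intro n hn
  rw [Nat.sub_eq_zero_of_le (by simpa using hn), hw₀, smul_zero]

theorem norm_apply_exp_smul_apply_le_of_chain {F : Type*} [NormedAddCommGroup F]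
    [NormedSpace ℂ F] (hw₀ : w 0 = 0)
    (hchain : ∀ k, 1 ≤ k → k ≤ M → B (w k) = ζ • w k + w (k - 1)) (hζ : ζ.re ≤ 0) {τ : ℝ}
    (hτ : 0 ≤ τ) (T : E →L[ℂ] F) {C : ℝ} (hT : ∀ i ≤ M, ‖T (w i)‖ ≤ C) {k : ℕ} (hk : k ≤ M) :
    ‖T (NormedSpace.exp ((τ : ℂ) • B) (w k))‖ ≤ Real.exp τ * C := by
  have hC : 0 ≤ C := (norm_nonneg _).trans (hT 0 (Nat.zero_le M))
  have hexp : ‖Complex.exp (τ * ζ)‖ ≤ 1 := by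
    rw [Complex.norm_exp, Real.exp_le_one_iff]
    simpa using mul_nonpos_of_nonneg_of_nonpos hτ hζ
  rw [exp_smul_apply_of_chain hw₀ hchain _ hk, map_smul, map_sum, norm_smul]
  calc _ ≤ 1 * ∑ i ∈ range k, τ ^ i / i ! * C := by
        gcongr
        refine (norm_sum_le _ _).trans (sum_le_sum fun i _ => ?_)
        rw [map_smul, norm_smul, norm_div, norm_pow, Complex.norm_real, Real.norm_of_nonneg hτ,
          Complex.norm_natCast]
        gcongr
        exact hT _ (by omega)
    _ ≤ Real.exp τ * C := by
        rw [one_mul, ← sum_mul]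
        exact mul_le_mul_of_nonneg_right (Real.sum_le_exp_of_nonneg hτ k) hC

end JordanChain

section Lyapunov

open ContinuousLinearMap

variable {H : Type*} [NormedAddCommGroup H] [InnerProductSpace ℂ H] [CompleteSpace H]

/-- The operator on the right-hand side of `WeakLyapunov`, which thus reads
`A V + V A† = -lyapunovSource A N q τ`. -/
noncomputable def lyapunovSource (A N : H →L[ℂ] H) (q τ : ℝ) : H →L[ℂ] H :=
  NormedSpace.exp ((τ : ℂ) • A) * (A - (q : ℂ) • 1) * N * (adjoint A - (q : ℂ) • 1)

variable {A N V : H →L[ℂ] H} {q τ : ℝ} {Λ : ℂ} {M : ℕ} {w : ℕ → H}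

theorem inner_lyapunovSource (u v : H) :
    ⟪u, lyapunovSource A N q τ v⟫
      = ⟪(adjoint A - (q : ℂ) • 1) (NormedSpace.exp ((τ : ℂ) • adjoint A) u),
          N ((adjoint A - (q : ℂ) • 1) v)⟫ := by
  have hexp : adjoint (NormedSpace.exp ((τ : ℂ) • A))
      = NormedSpace.exp ((τ : ℂ) • adjoint A) := by
    rw [← star_eq_adjoint, NormedSpace.star_exp, star_smul, star_eq_adjoint, Complex.star_def,
      Complex.conj_ofReal]
  have hsub : adjoint (A - (q : ℂ) • 1) = adjoint A - (q : ℂ) • 1 := by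
    rw [← star_eq_adjoint, star_sub, star_smul, star_one, star_eq_adjoint, Complex.star_def,
      Complex.conj_ofReal]
  simp only [lyapunovSource, mul_apply_eq_comp]
  rw [← adjoint_inner_left, hexp, ← adjoint_inner_left, hsub]

theorem WeakLyapunov.chain_recursion (hLy : WeakLyapunov A N V q τ)
    (hchain : ∀ k, 1 ≤ k → k ≤ M → adjoint A (w k) = (starRingEnd ℂ) Λ • w k + w (k - 1))
    {j k : ℕ} (hj : 1 ≤ j) (hjM : j ≤ M) (hk : 1 ≤ k) (hkM : k ≤ M) :
    ((2 * -Λ.re : ℝ) : ℂ) * ⟪w j, V (w k)⟫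
      = ⟪w (j - 1), V (w k)⟫ + ⟪w j, V (w (k - 1))⟫ + ⟪w j, lyapunovSource A N q τ (w k)⟫ := by
  have h : ⟪w j, A (V (w k))⟫ + ⟪w j, V (adjoint A (w k))⟫
      = -⟪w j, lyapunovSource A N q τ (w k)⟫ := hLy (w j) (w k)
  rw [← adjoint_inner_left, hchain j hj hjM, hchain k hk hkM, inner_add_left, inner_smul_left,
    map_add, map_smul, inner_add_right, inner_smul_right, Complex.conj_conj] at h
  have hre : ((2 * -Λ.re : ℝ) : ℂ) = -(Λ + (starRingEnd ℂ) Λ) := by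
    rw [Complex.add_conj]; push_cast; ring
  rw [hre]
  linear_combination -h

theorem norm_inner_lyapunovSource_le (hτ : 0 ≤ τ) (hre : Λ.re ≤ 0) (hw₀ : w 0 = 0)
    (hchain : ∀ k, 1 ≤ k → k ≤ M → adjoint A (w k) = (starRingEnd ℂ) Λ • w k + w (k - 1))
    {Cp : ℝ} (hCp : 0 ≤ Cp) (hN : ‖N‖ ≤ Cp) (hw : ∀ k, 1 ≤ k → k ≤ M → ‖w k‖ ≤ Cp)
    (hΛ : ‖Λ‖ ≤ Cp) (hq : |q| ≤ Cp) {j k : ℕ} (hjM : j ≤ M) (hkM : k ≤ M) :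
    ‖⟪w j, lyapunovSource A N q τ (w k)⟫‖
      ≤ Real.exp τ * ((2 * Cp + 1) * Cp) * (Cp * ((2 * Cp + 1) * Cp)) := by
  have hw' : ∀ i ≤ M, ‖w i‖ ≤ Cp := fun i hi => by
    rcases Nat.eq_zero_or_pos i with rfl | hi₁
    · simpa [hw₀] using hCp
    · exact hw i hi₁ hi
  have hshift : ∀ i ≤ M, ‖(adjoint A - (q : ℂ) • 1) (w i)‖ ≤ (2 * Cp + 1) * Cp := fun i hi => by
    rcases Nat.eq_zero_or_pos i with rfl | hi₁
    · rw [hw₀, map_zero, norm_zero]; positivity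
    rw [sub_apply, hchain i hi₁ hi, smul_apply, one_apply_eq_self, add_sub_right_comm,
      ← sub_smul]
    calc _ ≤ ‖(starRingEnd ℂ) Λ - q‖ * ‖w i‖ + ‖w (i - 1)‖ :=
          (norm_add_le _ _).trans (by rw [norm_smul])
      _ ≤ (Cp + Cp) * Cp + Cp := by
        gcongr
        · exact (norm_sub_le _ _).trans (by simpa using add_le_add hΛ hq)
        · exact hw' i hi
        · exact hw' _ (by omega)
      _ = (2 * Cp + 1) * Cp := by ring
  rw [inner_lyapunovSource]
  refine (norm_inner_le_norm _ _).trans (mul_le_mul ?_ ?_ (norm_nonneg _) (by positivity))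
  · exact norm_apply_exp_smul_apply_le_of_chain hw₀ hchain (by simpa using hre) hτ _ hshift hjM
  · exact (le_opNorm _ _).trans (mul_le_mul hN (hshift k hkM) (norm_nonneg _) hCp)

theorem le_norm_inner_lyapunovSource_one (hτ : 0 ≤ τ) (hw₀ : w 0 = 0)
    (hchain : ∀ k, 1 ≤ k → k ≤ M → adjoint A (w k) = (starRingEnd ℂ) Λ • w k + w (k - 1))
    (hM : 1 ≤ M) {Cm Cp : ℝ} (hCm : 0 ≤ Cm) (hΛ : ‖Λ‖ ≤ Cp) (hq : Cm ≤ ‖Λ - q‖)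
    (hN : Cm ≤ ‖⟪w 1, N (w 1)⟫‖) :
    Real.exp (-(τ * Cp)) * Cm ^ 3 ≤ ‖⟪w 1, lyapunovSource A N q τ (w 1)⟫‖ := by
  have hexp : NormedSpace.exp ((τ : ℂ) • adjoint A) (w 1)
      = Complex.exp (τ * (starRingEnd ℂ) Λ) • w 1 := by
    rw [exp_smul_apply_of_chain hw₀ hchain _ hM]
    simp
  have hshift : (adjoint A - (q : ℂ) • 1) (w 1) = ((starRingEnd ℂ) Λ - q) • w 1 := by
    simp [hchain 1 le_rfl hM, hw₀, sub_smul]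
  have hconj : ‖(starRingEnd ℂ) Λ - q‖ = ‖Λ - q‖ := by
    rw [← RCLike.norm_conj, map_sub, Complex.conj_conj, Complex.conj_ofReal]
  have hnorm : ‖⟪w 1, lyapunovSource A N q τ (w 1)⟫‖
      = Real.exp (τ * Λ.re) * ‖Λ - q‖ ^ 2 * ‖⟪w 1, N (w 1)⟫‖ := by
    rw [inner_lyapunovSource, hexp, map_smul, hshift, smul_smul, map_smul, inner_smul_left,
      inner_smul_right, norm_mul, norm_mul, RCLike.norm_conj, norm_mul, hconj, Complex.norm_exp]
    simp only [Complex.mul_re, Complex.ofReal_re, Complex.conj_re, Complex.ofReal_im,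
      Complex.conj_im, mul_neg, zero_mul, neg_zero, sub_zero]
    ring
  have hre : -(τ * Cp) ≤ τ * Λ.re := by
    nlinarith [neg_abs_le Λ.re, Complex.abs_re_le_norm Λ]
  rw [hnorm, pow_succ Cm 2, ← mul_assoc]
  gcongr

end Lyapunov

/-- The number of monotone lattice paths from `(1, 1)` to `(j, k)`, that is
`Nat.choose (j + k - 2) (j - 1)` for `j, k ≥ 1`. -/
def latticePaths : ℕ → ℕ → ℕ
  | 0, _ => 0
  | _, 0 => 0
  | 1, 1 => 1
  | j + 1, k + 1 => latticePaths j (k + 1) + latticePaths (j + 1) k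

theorem one_le_latticePaths {j k : ℕ} (hj : 1 ≤ j) (hk : 1 ≤ k) : 1 ≤ latticePaths j k := by
  induction j, k using latticePaths.induct with
  | case4 j k h ihj ihk =>
    rw [latticePaths.eq_4 _ _ h]
    grind
  | _ => simp_all [latticePaths]

theorem latticePaths_le_two_pow (j k : ℕ) : latticePaths j k ≤ 2 ^ (j + k) := by
  induction j, k using latticePaths.induct with
  | case4 j k h ihj ihk =>
    rw [latticePaths.eq_4 _ _ h]
    grind
  | _ => simp [latticePaths]

theorem norm_sub_latticePaths_smul_le {E : Type*} [SeminormedAddCommGroup E] {M : ℕ}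
    {P e : ℕ → ℕ → E} {ε : ℝ} (hε : 0 ≤ ε) (hP₀ : ∀ k, P 0 k = 0) (hP₀' : ∀ j, P j 0 = 0)
    (hP : ∀ j k, 1 ≤ j → j ≤ M → 1 ≤ k → k ≤ M → P j k = P (j - 1) k + P j (k - 1) + e j k)
    (he : ∀ j k, 1 ≤ j → j ≤ M → 1 ≤ k → k ≤ M → 3 ≤ j + k → ‖e j k‖ ≤ ε) :
    ∀ j k, j ≤ M → k ≤ M → ‖P j k - latticePaths j k • e 1 1‖ ≤ 3 ^ (j + k) * ε := by
  intro j k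
  induction j, k using latticePaths.induct with
  | case1 k => intros; simp only [hP₀, latticePaths, zero_smul, sub_zero, norm_zero]; positivity
  | case2 j _ => intros; simp only [hP₀', latticePaths, zero_smul, sub_zero, norm_zero]; positivity
  | case3 =>
    intro h _
    have h₁₁ : P 1 1 = e 1 1 := by simpa [hP₀, hP₀'] using hP 1 1 le_rfl h le_rfl h
    rw [h₁₁, latticePaths.eq_3, one_smul, sub_self, norm_zero]
    positivity
  | case4 j k h ihj ihk =>
    intro hj hk
    have hjk : 1 ≤ j + k := by by_contra; exact h (by omega) (by omega)
    have hsplit : P (j + 1) (k + 1) - latticePaths (j + 1) (k + 1) • e 1 1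
        = (P j (k + 1) - latticePaths j (k + 1) • e 1 1)
          + (P (j + 1) k - latticePaths (j + 1) k • e 1 1) + e (j + 1) (k + 1) := by
      rw [hP _ _ (by omega) hj (by omega) hk, latticePaths.eq_4 _ _ h, add_smul]
      simp only [Nat.succ_eq_add_one, Nat.add_sub_cancel]
      abel
    rw [hsplit]
    calc _ ≤ 3 ^ (j + k + 1) * ε + 3 ^ (j + k + 1) * ε + ε := by
          refine norm_add₃_le.trans (add_le_add_three ?_ ?_
            (he _ _ (by omega) hj (by omega) hk (by omega)))
          · simpa only [← add_assoc] using ihj (by omega) hk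
          · simpa only [add_right_comm j 1 k] using ihk hj (by omega)
      _ ≤ 3 * 3 ^ (j + k + 1) * ε := by
          nlinarith [one_le_pow₀ (M₀ := ℝ) (a := 3) (by norm_num) (n := j + k + 1)]
      _ = 3 ^ (j + 1 + (k + 1)) * ε := by ring

theorem norm_sum_mul_le_card_mul {ι : Type*} {s : Finset ι} {a b : ι → ℂ} {A B : ℝ}
    (ha : ∀ i ∈ s, ‖a i‖ ≤ A) (hb : ∀ i ∈ s, ‖b i‖ ≤ B) :
    ‖∑ i ∈ s, a i * b i‖ ≤ s.card * (A * B) := by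
  rw [← nsmul_eq_mul]
  refine (norm_sum_le _ _).trans (sum_le_card_nsmul _ _ _ fun i hi => ?_)
  rw [norm_mul]
  exact mul_le_mul (ha i hi) (hb i hi) (norm_nonneg _) ((norm_nonneg _).trans (ha i hi))

theorem norm_sum_mul_sub_le_of_approx_single {ι : Type*} [DecidableEq ι] {s : Finset ι} {a : ι}
    (ha : a ∈ s) {ω g : ι → ℂ} {L : ℂ} {W ε : ℝ} (hω : ∀ x ∈ s, ‖ω x‖ ≤ W)
    (hg : ∀ x ∈ s, ‖g x - if x = a then L else 0‖ ≤ ε) :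
    ‖∑ x ∈ s, ω x * g x - ω a * L‖ ≤ s.card * (W * ε) := by
  have hsingle : ω a * L = ∑ x ∈ s, ω x * if x = a then L else 0 := by
    simp [ha]
  simp only [hsingle, ← sum_sub_distrib, ← mul_sub]
  exact norm_sum_mul_le_card_mul hω hg

section ScaledRecursion

variable {M : ℕ} {G R : ℕ → ℕ → ℂ} {μ CR : ℝ}

theorem norm_pow_mul_sub_latticePaths_mul_le (hμ₀ : 0 ≤ μ) (hμ₁ : μ ≤ 1) (hCR : 0 ≤ CR)
    (hG₀ : ∀ k, G 0 k = 0) (hG₀' : ∀ j, G j 0 = 0)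
    (hrec : ∀ j k, 1 ≤ j → j ≤ M → 1 ≤ k → k ≤ M →
      (μ : ℂ) * G j k = G (j - 1) k + G j (k - 1) + R j k)
    (hR : ∀ j k, 1 ≤ j → j ≤ M → 1 ≤ k → k ≤ M → ‖R j k‖ ≤ CR) {j k : ℕ} (hjM : j ≤ M)
    (hkM : k ≤ M) :
    ‖(μ : ℂ) ^ (j + k - 1) * G j k - latticePaths j k * R 1 1‖ ≤ 3 ^ (j + k) * (CR * μ) := by
  -- `μ^(j+k-1) G` obeys Pascal's rule up to `μ^(j+k-2) R`, which is `O(μ)` away from `(1, 1)`.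
  have h := norm_sub_latticePaths_smul_le (M := M) (P := fun j k => (μ : ℂ) ^ (j + k - 1) * G j k)
    (e := fun j k => (μ : ℂ) ^ (j + k - 2) * R j k) (ε := CR * μ) (by positivity)
    (fun k => by simp [hG₀]) (fun j => by simp [hG₀'])
    (fun j k hj hjM hk hkM => by
      rw [show j + k - 1 = j + k - 2 + 1 by omega, pow_succ, mul_assoc, hrec j k hj hjM hk hkM,
        show j - 1 + k - 1 = j + k - 2 by omega, show j + (k - 1) - 1 = j + k - 2 by omega]
      ring)
    (fun j k hj hjM hk hkM hjk => by
      rw [norm_mul, norm_pow, Complex.norm_real, Real.norm_of_nonneg hμ₀, mul_comm CR]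
      exact mul_le_mul (pow_le_of_le_one hμ₀ hμ₁ (by omega)) (hR j k hj hjM hk hkM)
        (norm_nonneg _) hμ₀)
    j k hjM hkM
  simpa [nsmul_eq_mul] using h

theorem norm_pow_mul_le (hμ₀ : 0 ≤ μ) (hμ₁ : μ ≤ 1) (hCR : 0 ≤ CR)
    (hG₀ : ∀ k, G 0 k = 0) (hG₀' : ∀ j, G j 0 = 0)
    (hrec : ∀ j k, 1 ≤ j → j ≤ M → 1 ≤ k → k ≤ M →
      (μ : ℂ) * G j k = G (j - 1) k + G j (k - 1) + R j k)
    (hR : ∀ j k, 1 ≤ j → j ≤ M → 1 ≤ k → k ≤ M → ‖R j k‖ ≤ CR) {j k : ℕ} (hj : 1 ≤ j)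
    (hjM : j ≤ M) (hkM : k ≤ M) :
    ‖(μ : ℂ) ^ (j + k - 1) * G j k‖ ≤ (4 ^ M + 9 ^ M) * CR := by
  have hlead : ‖(latticePaths j k : ℂ) * R 1 1‖ ≤ 4 ^ M * CR := by
    rw [norm_mul, Complex.norm_natCast]
    refine mul_le_mul ?_ (hR 1 1 le_rfl (by omega) le_rfl (by omega)) (norm_nonneg _)
      (by positivity)
    calc (latticePaths j k : ℝ) ≤ 2 ^ (j + k) := by exact_mod_cast latticePaths_le_two_pow j k
      _ ≤ 2 ^ (2 * M) := pow_le_pow_right₀ (by norm_num) (by omega)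
      _ = 4 ^ M := by rw [pow_mul]; norm_num
  have herr : 3 ^ (j + k) * (CR * μ) ≤ 9 ^ M * CR := by
    calc 3 ^ (j + k) * (CR * μ) ≤ 3 ^ (2 * M) * (CR * 1) := by
          gcongr <;> first | omega | norm_num
      _ = 9 ^ M * CR := by rw [pow_mul]; norm_num
  calc _ ≤ ‖(latticePaths j k : ℂ) * R 1 1‖ + 3 ^ (j + k) * (CR * μ) :=
        (norm_le_norm_add_norm_sub' _ _).trans (add_le_add le_rfl
          (norm_pow_mul_sub_latticePaths_mul_le hμ₀ hμ₁ hCR hG₀ hG₀' hrec hR hjM hkM))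
    _ ≤ (4 ^ M + 9 ^ M) * CR := by linarith

theorem norm_pow_mul_sub_ite_le (hμ₀ : 0 ≤ μ) (hμ₁ : μ ≤ 1) (hCR : 0 ≤ CR)
    (hG₀ : ∀ k, G 0 k = 0) (hG₀' : ∀ j, G j 0 = 0)
    (hrec : ∀ j k, 1 ≤ j → j ≤ M → 1 ≤ k → k ≤ M →
      (μ : ℂ) * G j k = G (j - 1) k + G j (k - 1) + R j k)
    (hR : ∀ j k, 1 ≤ j → j ≤ M → 1 ≤ k → k ≤ M → ‖R j k‖ ≤ CR) {k₁ k₂ j k : ℕ}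
    (hk₁M : k₁ ≤ M) (hk₂M : k₂ ≤ M) (hj : 1 ≤ j) (hjk₁ : j ≤ k₁) (hkk₂ : k ≤ k₂) :
    ‖(μ : ℂ) ^ (k₁ + k₂ - 1) * G j k
        - if (j, k) = (k₁, k₂) then (latticePaths k₁ k₂ : ℂ) * R 1 1 else 0‖
      ≤ (4 ^ M + 9 ^ M) * CR * μ := by
  split_ifs with hjk
  · obtain ⟨rfl, rfl⟩ := Prod.ext_iff.mp hjk
    calc _ ≤ 3 ^ (j + k) * (CR * μ) :=
          norm_pow_mul_sub_latticePaths_mul_le hμ₀ hμ₁ hCR hG₀ hG₀' hrec hR hk₁M hk₂M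
      _ ≤ 3 ^ (2 * M) * (CR * μ) := by gcongr <;> first | omega | norm_num
      _ = 9 ^ M * (CR * μ) := by rw [pow_mul]; norm_num
      _ ≤ (4 ^ M + 9 ^ M) * CR * μ := by
        nlinarith [mul_nonneg hCR hμ₀, pow_pos (by norm_num : (0 : ℝ) < 4) M]
  · have hlt : j + k < k₁ + k₂ := by
      by_contra
      exact hjk (Prod.ext (show j = k₁ by omega) (show k = k₂ by omega))
    rw [sub_zero, show k₁ + k₂ - 1 = (k₁ + k₂ - 1 - (j + k - 1)) + (j + k - 1) by omega,
      pow_add, mul_assoc, norm_mul, norm_pow, Complex.norm_real, Real.norm_of_nonneg hμ₀,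
      mul_comm _ μ]
    exact mul_le_mul (pow_le_of_le_one hμ₀ hμ₁ (by omega))
      (norm_pow_mul_le hμ₀ hμ₁ hCR hG₀ hG₀' hrec hR hj (by omega) (by omega)) (norm_nonneg _) hμ₀

theorem norm_pow_mul_sum_sum_sub_le (hμ₀ : 0 ≤ μ) (hμ₁ : μ ≤ 1) (hCR : 0 ≤ CR)
    (hG₀ : ∀ k, G 0 k = 0) (hG₀' : ∀ j, G j 0 = 0)
    (hrec : ∀ j k, 1 ≤ j → j ≤ M → 1 ≤ k → k ≤ M →
      (μ : ℂ) * G j k = G (j - 1) k + G j (k - 1) + R j k)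
    (hR : ∀ j k, 1 ≤ j → j ≤ M → 1 ≤ k → k ≤ M → ‖R j k‖ ≤ CR) {k₁ k₂ : ℕ} (hk₁ : 1 ≤ k₁)
    (hk₁M : k₁ ≤ M) (hk₂ : 1 ≤ k₂) (hk₂M : k₂ ≤ M) {c d : ℕ → ℂ} {C₁ C₂ : ℝ}
    (hc : ∀ j ∈ Icc 1 k₁, ‖c j‖ ≤ C₁) (hd : ∀ k ∈ Icc 1 k₂, ‖d k‖ ≤ C₂) :
    ‖(μ : ℂ) ^ (k₁ + k₂ - 1) * ∑ j ∈ Icc 1 k₁, ∑ k ∈ Icc 1 k₂,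
          (starRingEnd ℂ) (c j) * d k * G j k
        - (starRingEnd ℂ) (c k₁) * d k₂ * (latticePaths k₁ k₂ * R 1 1)‖
      ≤ k₁ * k₂ * (C₁ * C₂ * ((4 ^ M + 9 ^ M) * CR * μ)) := by
  have hsum : (μ : ℂ) ^ (k₁ + k₂ - 1) * ∑ j ∈ Icc 1 k₁, ∑ k ∈ Icc 1 k₂,
        (starRingEnd ℂ) (c j) * d k * G j k
      = ∑ x ∈ Icc 1 k₁ ×ˢ Icc 1 k₂,
        ((starRingEnd ℂ) (c x.1) * d x.2) * ((μ : ℂ) ^ (k₁ + k₂ - 1) * G x.1 x.2) := by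
    rw [sum_product, mul_sum]
    refine sum_congr rfl fun j _ => ?_
    rw [mul_sum]
    exact sum_congr rfl fun k _ => by ring
  have hcard : ((Icc 1 k₁ ×ˢ Icc 1 k₂).card : ℝ) = k₁ * k₂ := by simp
  rw [hsum, ← hcard]
  refine norm_sum_mul_sub_le_of_approx_single (a := (k₁, k₂)) (by simp [hk₁, hk₂]) ?_ ?_
  · intro x hx
    rw [mem_product, mem_Icc, mem_Icc] at hx
    rw [norm_mul, RCLike.norm_conj]
    exact mul_le_mul (hc _ (mem_Icc.2 hx.1)) (hd _ (mem_Icc.2 hx.2)) (norm_nonneg _)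
      ((norm_nonneg _).trans (hc k₁ (by simp [hk₁])))
  · rintro ⟨j, k⟩ hx
    rw [mem_product, mem_Icc, mem_Icc] at hx
    exact norm_pow_mul_sub_ite_le hμ₀ hμ₁ hCR hG₀ hG₀' hrec hR hk₁M hk₂M hx.1.1 hx.1.2 hx.2.2

end ScaledRecursion

section Pairing

variable {H : Type*} [NormedAddCommGroup H] [InnerProductSpace ℂ H]

theorem inner_sum_smul_add_apply_sum_smul_add (V : H →L[ℂ] H) (s t : Finset ℕ) (c d : ℕ → ℂ)
    (u : ℕ → H) (r₁ r₂ : H) :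
    ⟪∑ j ∈ s, c j • u j + r₁, V (∑ k ∈ t, d k • u k + r₂)⟫
      = ∑ j ∈ s, ∑ k ∈ t, (starRingEnd ℂ) (c j) * d k * ⟪u j, V (u k)⟫
        + (∑ j ∈ s, (starRingEnd ℂ) (c j) * ⟪u j, V r₂⟫ + ∑ k ∈ t, d k * ⟪r₁, V (u k)⟫
          + ⟪r₁, V r₂⟫) := by
  simp only [map_add, map_sum, map_smul, inner_add_left, inner_add_right, sum_inner, inner_sum,
    inner_smul_left, inner_smul_right, mul_add, mul_sum, sum_add_distrib]
  rw [sum_comm (s := t)]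
  simp only [mul_left_comm (d _), mul_assoc]
  ring

theorem sum_Icc_eq_sum_Icc_of_eq_zero {E : Type*} [AddCommMonoid E] {f : ℕ → E} {k M : ℕ}
    (hkM : k ≤ M) (hf : ∀ i, k < i → f i = 0) : ∑ i ∈ Icc 1 M, f i = ∑ i ∈ Icc 1 k, f i :=
  (sum_subset (Icc_subset_Icc le_rfl hkM) fun i hi hi' =>
    hf i (by simp only [mem_Icc] at hi hi'; omega)).symm

theorem norm_pow_mul_inner_sub_le {V : H →L[ℂ] H} {M : ℕ} {w : ℕ → H} {R : ℕ → ℕ → ℂ}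
    {μ CR Cr : ℝ} (hμ₀ : 0 ≤ μ) (hμ₁ : μ ≤ 1) (hCR : 0 ≤ CR) (hw₀ : w 0 = 0)
    (hrec : ∀ j k, 1 ≤ j → j ≤ M → 1 ≤ k → k ≤ M →
      (μ : ℂ) * ⟪w j, V (w k)⟫ = ⟪w (j - 1), V (w k)⟫ + ⟪w j, V (w (k - 1))⟫ + R j k)
    (hR : ∀ j k, 1 ≤ j → j ≤ M → 1 ≤ k → k ≤ M → ‖R j k‖ ≤ CR) {k₁ k₂ : ℕ} (hk₁ : 1 ≤ k₁)
    (hk₁M : k₁ ≤ M) (hk₂ : 1 ≤ k₂) (hk₂M : k₂ ≤ M) {c d : ℕ → ℂ} {C₁ C₂ : ℝ}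
    (hc : ∀ j ∈ Icc 1 k₁, ‖c j‖ ≤ C₁) (hd : ∀ k ∈ Icc 1 k₂, ‖d k‖ ≤ C₂) {r₁ r₂ : H}
    (hrr : ‖⟪r₁, V r₂⟫‖ ≤ Cr) (hrw : ∀ k, 1 ≤ k → k ≤ M → ‖⟪r₁, V (w k)⟫‖ ≤ Cr)
    (hwr : ∀ k, 1 ≤ k → k ≤ M → ‖⟪w k, V r₂⟫‖ ≤ Cr) :
    ‖(μ : ℂ) ^ (k₁ + k₂ - 1)
          * ⟪∑ j ∈ Icc 1 k₁, c j • w j + r₁, V (∑ k ∈ Icc 1 k₂, d k • w k + r₂)⟫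
        - (starRingEnd ℂ) (c k₁) * d k₂ * (latticePaths k₁ k₂ * R 1 1)‖
      ≤ (k₁ * k₂ * (C₁ * C₂ * ((4 ^ M + 9 ^ M) * CR)) + (k₁ * C₁ + k₂ * C₂ + 1) * Cr) * μ := by
  have hmain := norm_pow_mul_sum_sum_sub_le (G := fun j k => ⟪w j, V (w k)⟫) hμ₀ hμ₁ hCR
    (fun k => by simp [hw₀]) (fun j => by simp [hw₀]) hrec hR hk₁ hk₁M hk₂ hk₂M hc hd
  have hrest : ‖∑ j ∈ Icc 1 k₁, (starRingEnd ℂ) (c j) * ⟪w j, V r₂⟫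
      + ∑ k ∈ Icc 1 k₂, d k * ⟪r₁, V (w k)⟫ + ⟪r₁, V r₂⟫‖ ≤ (k₁ * C₁ + k₂ * C₂ + 1) * Cr := by
    refine norm_add₃_le.trans ?_
    have h₁ := norm_sum_mul_le_card_mul (s := Icc 1 k₁) (a := fun j => (starRingEnd ℂ) (c j))
      (fun j hj => by simpa using hc j hj)
      (fun j hj => hwr j (mem_Icc.1 hj).1 ((mem_Icc.1 hj).2.trans hk₁M))
    have h₂ := norm_sum_mul_le_card_mul (s := Icc 1 k₂) hd
      (fun k hk => hrw k (mem_Icc.1 hk).1 ((mem_Icc.1 hk).2.trans hk₂M))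
    simp only [Nat.card_Icc, add_tsub_cancel_right] at h₁ h₂
    linarith
  have hpow : μ ^ (k₁ + k₂ - 1) ≤ μ := pow_le_of_le_one hμ₀ hμ₁ (by omega)
  rw [inner_sum_smul_add_apply_sum_smul_add, mul_add, add_sub_right_comm]
  refine (norm_add_le _ _).trans ?_
  rw [norm_mul, norm_pow, Complex.norm_real, Real.norm_of_nonneg hμ₀]
  calc _ ≤ k₁ * k₂ * (C₁ * C₂ * ((4 ^ M + 9 ^ M) * CR * μ))
          + μ * ((k₁ * C₁ + k₂ * C₂ + 1) * Cr) :=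
        add_le_add hmain (mul_le_mul hpow hrest (norm_nonneg _) hμ₀)
    _ = _ := by ring

end Pairing

theorem exists_eventually_bounds_of_continuousAt {X E : Type*} [TopologicalSpace X]
    [NormedAddCommGroup E] {c : ℕ → X → E} {x : X} {M k : ℕ}
    (hc : ∀ i, 1 ≤ i → i ≤ M → ContinuousAt (c i) x) (hk : 1 ≤ k ∧ k ≤ M) (hck : c k x ≠ 0) :
    ∃ α C : ℝ, 0 < α ∧ ∀ᶠ y in 𝓝 x, α ≤ ‖c k y‖ ∧ ∀ i ∈ Icc 1 M, ‖c i y‖ ≤ C := by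
  have hck' : 0 < ‖c k x‖ := norm_pos_iff.2 hck
  refine ⟨‖c k x‖ / 2, ∑ i ∈ Icc 1 M, (‖c i x‖ + 1), half_pos hck', ?_⟩
  have hlow := (hc k hk.1 hk.2).norm.eventually (lt_mem_nhds (half_lt_self hck'))
  have hup : ∀ᶠ y in 𝓝 x, ∀ i ∈ Icc 1 M, ‖c i y‖ ≤ ∑ i ∈ Icc 1 M, (‖c i x‖ + 1) := by
    refine (eventually_all_finset _).2 fun i hi => ?_
    filter_upwards [(hc i (mem_Icc.1 hi).1 (mem_Icc.1 hi).2).norm.eventually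
      (gt_mem_nhds (lt_add_one _))] with y hy
    exact hy.le.trans (single_le_sum (f := fun i => ‖c i x‖ + 1) (fun _ _ => by positivity) hi)
  filter_upwards [hlow, hup] with y h₁ h₂ using ⟨h₁.le, h₂⟩

theorem eventually_le_norm_le_of_tendsto_norm_sub {α E : Type*} [SeminormedAddCommGroup E]
    {l : Filter α} {y L : α → E} {lo hi : ℝ} (hlo : 0 < lo)
    (hL : ∀ᶠ a in l, lo ≤ ‖L a‖ ∧ ‖L a‖ ≤ hi) (hy : Tendsto (fun a => ‖y a - L a‖) l (𝓝 0)) :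
    ∀ᶠ a in l, lo / 2 ≤ ‖y a‖ ∧ ‖y a‖ ≤ hi + lo / 2 := by
  filter_upwards [hL, hy.eventually (ge_mem_nhds (half_pos hlo))] with a ⟨hlo', hhi⟩ hya
  have h₁ := norm_sub_norm_le (L a) (y a)
  have h₂ := norm_le_norm_add_norm_sub' (y a) (L a)
  rw [norm_sub_rev] at h₁
  constructor <;> linarith

theorem exists_pos_forall_of_eventually_nhdsLT {P : ℝ → Prop} {x : ℝ}
    (h : ∀ᶠ y in 𝓝[<] x, P y) : ∃ δ > 0, ∀ y, x - δ < y → y < x → P y := by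
  obtain ⟨l, hl, hsub⟩ := mem_nhdsLT_iff_exists_Ioo_subset.1 h
  exact ⟨x - l, sub_pos.2 hl, fun y h₁ h₂ => hsub ⟨by linarith, h₂⟩⟩

theorem le_norm_and_norm_le_of_two_mul_pow_mul {ν lo hi : ℝ} (hν : 0 < ν) {n : ℕ} {z : ℂ}
    (h : lo ≤ ‖((2 * ν : ℝ) : ℂ) ^ n * z‖ ∧ ‖((2 * ν : ℝ) : ℂ) ^ n * z‖ ≤ hi) :
    lo / 2 ^ n * ν ^ (-(n : ℤ)) ≤ ‖z‖ ∧ ‖z‖ ≤ hi / 2 ^ n * ν ^ (-(n : ℤ)) := by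
  have hscale : ∀ c : ℝ, c / 2 ^ n * ν ^ (-(n : ℤ)) = c / (2 * ν) ^ n := by
    intro c
    rw [zpow_neg, zpow_natCast, mul_pow, ← div_eq_mul_inv, div_div]
  rw [norm_mul, norm_pow, Complex.norm_real, Real.norm_of_nonneg (by positivity)] at h
  rw [hscale, hscale, div_le_iff₀ (by positivity), le_div_iff₀ (by positivity), mul_comm ‖z‖]
  exact h

theorem exists_zpow_bounds_of_tendsto_norm_sub {x lo hi : ℝ} (hlo : 0 < lo) {ν : ℝ → ℝ}
    (hν : ∀ p < x, 0 < ν p) {y L : ℝ → ℂ} {n : ℕ}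
    (hL : ∀ᶠ p in 𝓝[<] x, lo ≤ ‖L p‖ ∧ ‖L p‖ ≤ hi)
    (hy : Tendsto (fun p => ‖((2 * ν p : ℝ) : ℂ) ^ n * y p - L p‖) (𝓝[<] x) (𝓝 0)) :
    ∃ δ > 0, ∃ c C : ℝ, 0 < c ∧ c ≤ C ∧ ∀ p, x - δ < p → p < x →
      c * ν p ^ (-(n : ℤ)) ≤ ‖y p‖ ∧ ‖y p‖ ≤ C * ν p ^ (-(n : ℤ)) := by
  have hlohi : lo ≤ hi := let ⟨_, h⟩ := hL.exists; h.1.trans h.2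
  obtain ⟨δ, hδ, hδp⟩ := exists_pos_forall_of_eventually_nhdsLT
    ((eventually_le_norm_le_of_tendsto_norm_sub hlo hL hy).and self_mem_nhdsWithin)
  refine ⟨δ, hδ, lo / 2 / 2 ^ n, (hi + lo / 2) / 2 ^ n, by positivity, by gcongr; linarith,
    fun p h₁ h₂ => ?_⟩
  obtain ⟨hbounds, hp⟩ := hδp p h₁ h₂
  exact le_norm_and_norm_le_of_two_mul_pow_mul (hν p hp) hbounds

theorem autocovariance_scaling_general_directions_general

    {H : Type*} [NormedAddCommGroup H] [InnerProductSpace ℂ H] [CompleteSpace H]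
    (τ : ℝ) (hτ : 0 ≤ τ) (pstar : ℝ) (M₁ : ℕ) (hM₁ : 1 ≤ M₁)
    (Cm Cp : ℝ) (hCm : 0 < Cm) (hCp : 0 < Cp)
    (A N V : ℝ → (H →L[ℂ] H)) (q : ℝ → ℝ) (Λ : ℝ → ℂ) (w : ℝ → ℕ → H)
    (hLyap : ∀ p < pstar, WeakLyapunov (A p) (N p) (V p) (q p) τ)
    (hre : ∀ p < pstar, (Λ p).re < 0)
    (hw0 : ∀ p < pstar, w p 0 = 0)
    (hchain : ∀ p < pstar, ∀ k, 1 ≤ k → k ≤ M₁ →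
      (ContinuousLinearMap.adjoint (A p)) (w p k)
        = (starRingEnd ℂ) (Λ p) • w p k + w p (k - 1))
    (hq : ∀ p < pstar, Cm ≤ ‖Λ p - (q p : ℂ)‖)
    (hN1 : ∀ p < pstar, Cm ≤ ‖⟪w p 1, (N p) (w p 1)⟫‖)
    (hNnorm : ∀ p < pstar, ‖N p‖ ≤ Cp)
    (hwnorm : ∀ p < pstar, ∀ k, 1 ≤ k → k ≤ M₁ → ‖w p k‖ ≤ Cp)
    (hΛ : ∀ p < pstar, ‖Λ p‖ ≤ Cp)
    (hqb : ∀ p < pstar, |q p| ≤ Cp)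
    (hre0 : Tendsto (fun p => (Λ p).re) (nhdsWithin pstar (Set.Iio pstar)) (nhds 0))
    (f₁ f₂ : ℝ → H) (c₁ c₂ : ℕ → ℝ → ℂ) (r₁ r₂ : ℝ → H)
    (hf₁ : ∀ p < pstar, f₁ p = (∑ k ∈ Finset.Icc 1 M₁, c₁ k p • w p k) + r₁ p)
    (hf₂ : ∀ p < pstar, f₂ p = (∑ k ∈ Finset.Icc 1 M₁, c₂ k p • w p k) + r₂ p)
    (hcont₁ : ∀ k, 1 ≤ k → k ≤ M₁ → ContinuousAt (c₁ k) pstar)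
    (hcont₂ : ∀ k, 1 ≤ k → k ≤ M₁ → ContinuousAt (c₂ k) pstar)
    (hrr : ∀ p < pstar, ‖⟪r₁ p, (V p) (r₂ p)⟫‖ ≤ Cp)
    (hrw : ∀ p < pstar, ∀ k, 1 ≤ k → k ≤ M₁ → ‖⟪r₁ p, (V p) (w p k)⟫‖ ≤ Cp)
    (hwr : ∀ p < pstar, ∀ k, 1 ≤ k → k ≤ M₁ → ‖⟪w p k, (V p) (r₂ p)⟫‖ ≤ Cp)
    (k₁s k₂s : ℕ)
    (hk₁mem : 1 ≤ k₁s ∧ k₁s ≤ M₁) (hk₂mem : 1 ≤ k₂s ∧ k₂s ≤ M₁)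
    (hc₁star : c₁ k₁s pstar ≠ 0) (hc₂star : c₂ k₂s pstar ≠ 0)
    (hzero₁ : ∀ k, k₁s < k → ∀ p < pstar, c₁ k p = 0)
    (hzero₂ : ∀ k, k₂s < k → ∀ p < pstar, c₂ k p = 0) :
    ∃ δ > 0, ∃ c C : ℝ, 0 < c ∧ c ≤ C ∧
      ∀ p : ℝ, pstar - δ < p → p < pstar →
        c * (-(Λ p).re) ^ (-((k₁s : ℤ) + (k₂s : ℤ) - 1))
            ≤ ‖⟪f₁ p, (V p) (f₂ p)⟫‖
        ∧ ‖⟪f₁ p, (V p) (f₂ p)⟫‖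
            ≤ C * (-(Λ p).re) ^ (-((k₁s : ℤ) + (k₂s : ℤ) - 1)) := by
  obtain ⟨α₁, C₁, hα₁, hc₁⟩ := exists_eventually_bounds_of_continuousAt hcont₁ hk₁mem hc₁star
  obtain ⟨α₂, C₂, hα₂, hc₂⟩ := exists_eventually_bounds_of_continuousAt hcont₂ hk₂mem hc₂star
  have hμ : Tendsto (fun p => 2 * -(Λ p).re) (𝓝[<] pstar) (𝓝 0) := by
    simpa using hre0.neg.const_mul 2
  set L : ℝ → ℂ := fun p => (starRingEnd ℂ) (c₁ k₁s p) * c₂ k₂s p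
    * (latticePaths k₁s k₂s * ⟪w p 1, lyapunovSource (A p) (N p) (q p) τ (w p 1)⟫)
  obtain ⟨D, hD⟩ : ∃ D, ∀ᶠ p in 𝓝[<] pstar,
      ‖((2 * -(Λ p).re : ℝ) : ℂ) ^ (k₁s + k₂s - 1) * ⟪f₁ p, V p (f₂ p)⟫ - L p‖
        ≤ D * (2 * -(Λ p).re) := ⟨_, by
    filter_upwards [self_mem_nhdsWithin, hμ.eventually (ge_mem_nhds one_pos),
      nhdsWithin_le_nhds hc₁, nhdsWithin_le_nhds hc₂] with p hp hμ₁ ⟨_, hC₁⟩ ⟨_, hC₂⟩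
    rw [hf₁ p hp, hf₂ p hp,
      sum_Icc_eq_sum_Icc_of_eq_zero hk₁mem.2 fun k hk => by simp [hzero₁ k hk p hp],
      sum_Icc_eq_sum_Icc_of_eq_zero hk₂mem.2 fun k hk => by simp [hzero₂ k hk p hp]]
    exact norm_pow_mul_inner_sub_le (by linarith [hre p hp]) hμ₁ (by positivity) (hw0 p hp)
      (fun j k hj hjM hk hkM => (hLyap p hp).chain_recursion (hchain p hp) hj hjM hk hkM)
      (fun j k _ hjM _ hkM => norm_inner_lyapunovSource_le hτ (hre p hp).le (hw0 p hp)
        (hchain p hp) hCp.le (hNnorm p hp) (hwnorm p hp) (hΛ p hp) (hqb p hp) hjM hkM)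
      hk₁mem.1 hk₁mem.2 hk₂mem.1 hk₂mem.2
      (fun j hj => hC₁ j (Icc_subset_Icc le_rfl hk₁mem.2 hj))
      (fun k hk => hC₂ k (Icc_subset_Icc le_rfl hk₂mem.2 hk)) (hrr p hp) (hrw p hp) (hwr p hp)⟩
  have hL : ∀ᶠ p in 𝓝[<] pstar, α₁ * α₂ * (1 * (Real.exp (-(τ * Cp)) * Cm ^ 3)) ≤ ‖L p‖
      ∧ ‖L p‖ ≤ C₁ * C₂ * (2 ^ (k₁s + k₂s)
        * (Real.exp τ * ((2 * Cp + 1) * Cp) * (Cp * ((2 * Cp + 1) * Cp)))) := by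
    filter_upwards [self_mem_nhdsWithin, nhdsWithin_le_nhds hc₁, nhdsWithin_le_nhds hc₂]
      with p hp ⟨hα₁p, hC₁p⟩ ⟨hα₂p, hC₂p⟩
    have hC₁ := hC₁p k₁s (mem_Icc.2 hk₁mem)
    have hC₂ := hC₂p k₂s (mem_Icc.2 hk₂mem)
    have hα₂₀ : 0 ≤ α₂ := hα₂.le
    have hC₁₀ : 0 ≤ C₁ := (norm_nonneg _).trans hC₁
    have hC₁₂ : 0 ≤ C₁ * C₂ := mul_nonneg hC₁₀ ((norm_nonneg _).trans hC₂)
    have hlp₁ : (1 : ℝ) ≤ latticePaths k₁s k₂s := by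
      exact_mod_cast one_le_latticePaths hk₁mem.1 hk₂mem.1
    have hlp₂ : (latticePaths k₁s k₂s : ℝ) ≤ 2 ^ (k₁s + k₂s) := by
      exact_mod_cast latticePaths_le_two_pow k₁s k₂s
    have hR₁ := le_norm_inner_lyapunovSource_one hτ (hw0 p hp) (hchain p hp) hM₁ hCm.le
      (hΛ p hp) (hq p hp) (hN1 p hp)
    have hR₂ := norm_inner_lyapunovSource_le hτ (hre p hp).le (hw0 p hp) (hchain p hp) hCp.le
      (hNnorm p hp) (hwnorm p hp) (hΛ p hp) (hqb p hp) hM₁ hM₁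
    simp only [L, norm_mul, RCLike.norm_conj, Complex.norm_natCast]
    constructor <;> gcongr
  rw [show -((k₁s : ℤ) + (k₂s : ℤ) - 1) = -((k₁s + k₂s - 1 : ℕ) : ℤ) by omega]
  exact exists_zpow_bounds_of_tendsto_norm_sub (ν := fun p => -(Λ p).re) (by positivity)
    (fun p hp => neg_pos.2 (hre p hp)) hL
    (squeeze_zero' (.of_forall fun _ => norm_nonneg _) hD (by simpa using hμ.const_mul D))

/-- (Theorem 3.4(c), scaling law of the autocovariance along general
directions.)  Along a family of weak Lyapunov solutions with a dominant adjoint Jordan chain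
`w_1(p),…,w_{M₁}(p)` for `conj(Λ(p))`, `Re Λ(p) < 0`, `Re Λ(p) → 0` as `p → p*⁻`, uniform
bounds as stated, and families `f_m(p) = Σ_k c_{m,k}(p)·w_k(p) + r_m(p)` whose coefficients
are continuous at `p*`, whose remainder pairings with `V(p)` are uniformly bounded, and whose
top nonvanishing coefficients at `p*` are at indices `k₁*, k₂*` (with vanishing above them),
`|⟨f₁(p), V(p) f₂(p)⟩|` scales as `(−Re Λ(p))^{−(k₁*+k₂*−1)}` near `p*`. -/
theorem autocovariance_scaling_general_directions
    {H : Type*} [NormedAddCommGroup H] [InnerProductSpace ℂ H] [CompleteSpace H]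
    (τ : ℝ) (hτ : 0 ≤ τ) (pstar : ℝ) (M₁ : ℕ) (hM₁ : 1 ≤ M₁)
    (Cm Cp : ℝ) (hCm : 0 < Cm) (hCp : 0 < Cp)
    (A N V : ℝ → (H →L[ℂ] H)) (q : ℝ → ℝ) (Λ : ℝ → ℂ) (w : ℝ → ℕ → H)
    (hLyap : ∀ p < pstar, WeakLyapunov (A p) (N p) (V p) (q p) τ)
    (hre : ∀ p < pstar, (Λ p).re < 0)
    (hw0 : ∀ p < pstar, w p 0 = 0)
    (hchain : ∀ p < pstar, ∀ k, 1 ≤ k → k ≤ M₁ →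
      (ContinuousLinearMap.adjoint (A p)) (w p k)
        = (starRingEnd ℂ) (Λ p) • w p k + w p (k - 1))
    (hq : ∀ p < pstar, Cm ≤ ‖Λ p - (q p : ℂ)‖)
    (hN1 : ∀ p < pstar, Cm ≤ ‖⟪w p 1, (N p) (w p 1)⟫‖)
    (hNnorm : ∀ p < pstar, ‖N p‖ ≤ Cp)
    (hwnorm : ∀ p < pstar, ∀ k, 1 ≤ k → k ≤ M₁ → ‖w p k‖ ≤ Cp)
    (hΛ : ∀ p < pstar, ‖Λ p‖ ≤ Cp)
    (hqb : ∀ p < pstar, |q p| ≤ Cp)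
    (hre0 : Tendsto (fun p => (Λ p).re) (nhdsWithin pstar (Set.Iio pstar)) (nhds 0))
    (f₁ f₂ : ℝ → H) (c₁ c₂ : ℕ → ℝ → ℂ) (r₁ r₂ : ℝ → H)
    (hf₁ : ∀ p < pstar, f₁ p = (∑ k ∈ Finset.Icc 1 M₁, c₁ k p • w p k) + r₁ p)
    (hf₂ : ∀ p < pstar, f₂ p = (∑ k ∈ Finset.Icc 1 M₁, c₂ k p • w p k) + r₂ p)
    (hcont₁ : ∀ k, 1 ≤ k → k ≤ M₁ → ContinuousAt (c₁ k) pstar)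
    (hcont₂ : ∀ k, 1 ≤ k → k ≤ M₁ → ContinuousAt (c₂ k) pstar)
    (hrr : ∀ p < pstar, ‖⟪r₁ p, (V p) (r₂ p)⟫‖ ≤ Cp)
    (hrw : ∀ p < pstar, ∀ k, 1 ≤ k → k ≤ M₁ → ‖⟪r₁ p, (V p) (w p k)⟫‖ ≤ Cp)
    (hwr : ∀ p < pstar, ∀ k, 1 ≤ k → k ≤ M₁ → ‖⟪w p k, (V p) (r₂ p)⟫‖ ≤ Cp)
    (k₁s k₂s : ℕ)
    (hk₁mem : 1 ≤ k₁s ∧ k₁s ≤ M₁) (hk₂mem : 1 ≤ k₂s ∧ k₂s ≤ M₁)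
    (hc₁star : c₁ k₁s pstar ≠ 0) (hc₂star : c₂ k₂s pstar ≠ 0)
    (hmax₁ : ∀ k, k₁s < k → c₁ k pstar = 0) (hmax₂ : ∀ k, k₂s < k → c₂ k pstar = 0)
    (hzero₁ : ∀ k, k₁s < k → ∀ p < pstar, c₁ k p = 0)
    (hzero₂ : ∀ k, k₂s < k → ∀ p < pstar, c₂ k p = 0) :
    ∃ δ > 0, ∃ c C : ℝ, 0 < c ∧ c ≤ C ∧
      ∀ p : ℝ, pstar - δ < p → p < pstar →
        c * (-(Λ p).re) ^ (-((k₁s : ℤ) + (k₂s : ℤ) - 1))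
            ≤ ‖⟪f₁ p, (V p) (f₂ p)⟫‖
        ∧ ‖⟪f₁ p, (V p) (f₂ p)⟫‖
            ≤ C * (-(Λ p).re) ^ (-((k₁s : ℤ) + (k₂s : ℤ) - 1)) :=
  autocovariance_scaling_general_directions_general τ hτ pstar M₁ hM₁ Cm Cp hCm hCp A N V q Λ w
    hLyap hre hw0 hchain hq hN1 hNnorm hwnorm hΛ hqb hre0 f₁ f₂ c₁ c₂ r₁ r₂ hf₁ hf₂ hcont₁ hcont₂
    hrr hrw hwr k₁s k₂s hk₁mem hk₂mem hc₁star hc₂star hzero₁ hzero₂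
end
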